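/- arXiv:1412.1150 — 4 statements merged into one kernel-verified Lean document; each statement's English description precedes it below -/
import Mathlib

section
/- Let G be connected with n ≥ 2 vertices and let m = min_{x∈π} I(x). Then m > 0, m is an eigenvalue of Δ₁(G), and every eigenvalue μ ≠ 0 of Δ₁(G) satisfies μ ≥ m; that is, m is the second eigenvalue μ₂ of Δ₁(G). -/
open Finset

/-- The set-valued sign function: {1} for t>0, {-1} for t<0, [-1,1] for t=0. -/
def SgnSet (t : ℝ) : Set ℝ :=
  if 0 < t then {1} else if t < 0 then {-1} else Set.Icc (-1) 1

/-- The energy `I(x) = ∑_{{i,j}∈E} |x_i − x_j|`, each edge counted once. -/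
noncomputable def energy {n : ℕ} (G : SimpleGraph (Fin n)) [DecidableRel G.Adj]
    (x : Fin n → ℝ) : ℝ :=
  (1 / 2) * ∑ i, ∑ j ∈ G.neighborFinset i, |x i - x j|

/-- `(μ, x)` is an eigenpair of the 1-Laplacian of `G`: `x ∈ X` and there are
`z_{ij} ∈ Sgn(x_i − x_j)` with `z_{ji} = −z_{ij}` and `∑_{j∼i} z_{ij} ∈ μ d_i Sgn(x_i)`. -/
def IsEigenpair {n : ℕ} (G : SimpleGraph (Fin n)) [DecidableRel G.Adj]
    (μ : ℝ) (x : Fin n → ℝ) : Prop :=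
  (∑ i, (G.degree i : ℝ) * |x i| = 1) ∧
  ∃ z : Fin n → Fin n → ℝ,
    (∀ i j, G.Adj i j → z i j ∈ SgnSet (x i - x j)) ∧
    (∀ i j, G.Adj i j → z j i = - z i j) ∧
    (∀ i, ∃ s ∈ SgnSet (x i),
      ∑ j ∈ G.neighborFinset i, z i j = μ * (G.degree i : ℝ) * s)

/-- `δ⁺(x) = ∑_{i : x_i > 0} d_i`. -/
noncomputable def deltaPlus {n : ℕ} (G : SimpleGraph (Fin n)) [DecidableRel G.Adj]
    (x : Fin n → ℝ) : ℝ :=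
  ∑ i ∈ univ.filter (fun i => 0 < x i), (G.degree i : ℝ)

/-- `δ⁻(x) = ∑_{i : x_i < 0} d_i`. -/
noncomputable def deltaMinus {n : ℕ} (G : SimpleGraph (Fin n)) [DecidableRel G.Adj]
    (x : Fin n → ℝ) : ℝ :=
  ∑ i ∈ univ.filter (fun i => x i < 0), (G.degree i : ℝ)

/-- `δ⁰(x) = ∑_{i : x_i = 0} d_i`. -/
noncomputable def deltaZero {n : ℕ} (G : SimpleGraph (Fin n)) [DecidableRel G.Adj]
    (x : Fin n → ℝ) : ℝ :=
  ∑ i ∈ univ.filter (fun i => x i = 0), (G.degree i : ℝ)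

/-- `π = {x ∈ X : |δ⁺(x) − δ⁻(x)| ≤ δ⁰(x)}`. -/
def piSet {n : ℕ} (G : SimpleGraph (Fin n)) [DecidableRel G.Adj] : Set (Fin n → ℝ) :=
  {x | (∑ i, (G.degree i : ℝ) * |x i| = 1) ∧
    |deltaPlus G x - deltaMinus G x| ≤ deltaZero G x}

/-- The Cheeger constant `h(G) = min_{∅ ≠ S ⊊ V} |E(S, S̄)| / min(vol S, vol S̄)`. -/
noncomputable def cheeger {n : ℕ} (G : SimpleGraph (Fin n)) [DecidableRel G.Adj] : ℝ :=
  sInf { r : ℝ | ∃ S : Finset (Fin n), S.Nonempty ∧ S ≠ univ ∧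
    r = ((univ.filter (fun p : Fin n × Fin n => G.Adj p.1 p.2 ∧ p.1 ∈ S ∧ p.2 ∉ S)).card : ℝ) /
      min (∑ i ∈ S, (G.degree i : ℝ)) (∑ i ∈ Sᶜ, (G.degree i : ℝ)) }


namespace OneLap
set_option linter.unusedSectionVars false
set_option maxHeartbeats 1000000
variable {n : ℕ} (G : SimpleGraph (Fin n)) [DecidableRel G.Adj]

noncomputable def volR (X : Finset (Fin n)) : ℝ := ∑ i ∈ X, (G.degree i : ℝ)

noncomputable def eR (X Y : Finset (Fin n)) : ℝ :=
  ∑ i ∈ X, ∑ j ∈ G.neighborFinset i, (if j ∈ Y then (1:ℝ) else 0)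

lemma volR_nonneg (X : Finset (Fin n)) : 0 ≤ volR G X :=
  Finset.sum_nonneg fun i _ => by positivity

lemma volR_mono {X Y : Finset (Fin n)} (h : X ⊆ Y) : volR G X ≤ volR G Y :=
  Finset.sum_le_sum_of_subset_of_nonneg h (fun i _ _ => by positivity)

lemma eR_nonneg (X Y : Finset (Fin n)) : 0 ≤ eR G X Y :=
  Finset.sum_nonneg fun i _ => Finset.sum_nonneg fun j _ => by positivity

lemma eR_canon (X Y : Finset (Fin n)) :
    eR G X Y = ∑ i, ∑ j, (if i ∈ X then (1:ℝ) else 0) * (if j ∈ Y then (1:ℝ) else 0)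
      * (if G.Adj i j then (1:ℝ) else 0) := by
  rw [eR]
  rw [← Finset.sum_subset (Finset.subset_univ X)
    (fun i _ hi => by simp [hi] : ∀ i ∈ univ, i ∉ X →
      (∑ j, ((if i ∈ X then (1:ℝ) else 0) * (if j ∈ Y then (1:ℝ) else 0)
        * (if G.Adj i j then (1:ℝ) else 0)) = 0))]
  refine Finset.sum_congr rfl fun i hi => ?_
  simp only [hi, if_true, one_mul]
  rw [SimpleGraph.neighborFinset_eq_filter, Finset.sum_filter]
  refine Finset.sum_congr rfl fun j _ => ?_
  by_cases hj : j ∈ Y <;> by_cases ha : G.Adj i j <;> simp [hj, ha]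

lemma eR_symm (X Y : Finset (Fin n)) : eR G X Y = eR G Y X := by
  rw [eR_canon, eR_canon, Finset.sum_comm]
  refine Finset.sum_congr rfl fun i _ => Finset.sum_congr rfl fun j _ => ?_
  simp only [show G.Adj j i ↔ G.Adj i j from G.adj_comm j i]; ring

lemma eR_union_left {X X' : Finset (Fin n)} (h : Disjoint X X') (Y : Finset (Fin n)) :
    eR G (X ∪ X') Y = eR G X Y + eR G X' Y := Finset.sum_union h

lemma eR_union_right (X : Finset (Fin n)) {Y Y' : Finset (Fin n)} (h : Disjoint Y Y') :
    eR G X (Y ∪ Y') = eR G X Y + eR G X Y' := by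
  rw [eR, eR, eR, ← Finset.sum_add_distrib]
  refine Finset.sum_congr rfl fun i _ => ?_
  rw [← Finset.sum_add_distrib]
  refine Finset.sum_congr rfl fun j _ => ?_
  by_cases hy : j ∈ Y
  · have : j ∉ Y' := fun hy' => (Finset.disjoint_left.1 h) hy hy'
    simp [hy, this]
  · by_cases hy' : j ∈ Y' <;> simp [hy, hy', Finset.mem_union]

lemma eR_univ_right (X : Finset (Fin n)) : eR G X univ = volR G X := by
  refine Finset.sum_congr rfl fun i _ => ?_
  simp [← SimpleGraph.card_neighborFinset_eq_degree]

lemma sum_split (s t : Finset (Fin n)) (f : Fin n → ℝ) :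
    ∑ i ∈ s, f i = ∑ i ∈ s ∩ t, f i + ∑ i ∈ s ∩ tᶜ, f i := by
  rw [← Finset.sum_filter_add_sum_filter_not s (· ∈ t)]
  have h1 : s.filter (· ∈ t) = s ∩ t := Finset.filter_mem_eq_inter
  have h2 : s.filter (fun i => ¬ i ∈ t) = s ∩ tᶜ := by ext i; simp
  rw [h1, h2]

lemma nsum_swap (g : Fin n → Fin n → ℝ) :
    ∑ i, ∑ j ∈ G.neighborFinset i, g i j = ∑ i, ∑ j ∈ G.neighborFinset i, g j i := by
  have h : ∀ (g : Fin n → Fin n → ℝ), ∑ i, ∑ j ∈ G.neighborFinset i, g i j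
      = ∑ i, ∑ j, if G.Adj i j then g i j else 0 := by
    intro g; refine Finset.sum_congr rfl fun i _ => ?_
    rw [SimpleGraph.neighborFinset_eq_filter, Finset.sum_filter]
  rw [h, h, Finset.sum_comm]
  refine Finset.sum_congr rfl fun i _ => Finset.sum_congr rfl fun j _ => ?_
  simp only [show G.Adj j i ↔ G.Adj i j from G.adj_comm j i]

lemma exists_cross (hconn : G.Connected) {S : Finset (Fin n)} (hS : S.Nonempty)
    (hS' : Sᶜ.Nonempty) : ∃ i j, G.Adj i j ∧ i ∈ S ∧ j ∉ S := by
  obtain ⟨a, ha⟩ := hS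
  obtain ⟨b, hb⟩ := hS'
  rw [Finset.mem_compl] at hb
  have hr := (hconn a b).some
  clear hconn
  induction hr with
  | nil => exact absurd ha hb
  | @cons u v w huv p ih =>
    by_cases hv : v ∈ S
    · exact ih hv hb
    · exact ⟨u, v, huv, ha, hv⟩

lemma degree_pos (hconn : G.Connected) (hn : 2 ≤ n) (i : Fin n) : 0 < G.degree i := by
  have hcard : 1 < Fintype.card (Fin n) := by simpa using (by omega : 1 < n)
  obtain ⟨j, hj⟩ := Fintype.exists_ne_of_one_lt_card hcard i
  have hS : ({i} : Finset (Fin n)).Nonempty := ⟨i, by simp⟩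
  have hS' : ({i} : Finset (Fin n))ᶜ.Nonempty := ⟨j, by simp [hj]⟩
  obtain ⟨a, b, hab, ha, hb⟩ := exists_cross G hconn hS hS'
  have : a = i := by simpa using ha
  subst this
  rw [← SimpleGraph.card_neighborFinset_eq_degree]
  exact Finset.card_pos.2 ⟨b, by simp [hab]⟩

lemma volR_pos (hconn : G.Connected) (hn : 2 ≤ n) {X : Finset (Fin n)} (hX : X.Nonempty) :
    0 < volR G X := by
  obtain ⟨i, hi⟩ := hX
  refine lt_of_lt_of_le ?_ (Finset.single_le_sum (f := fun i => (G.degree i : ℝ))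
    (fun i _ => by positivity) hi)
  simpa using (Nat.cast_pos (α := ℝ)).2 (degree_pos G hconn hn i)

lemma one_le_eR_cross (hconn : G.Connected) {S : Finset (Fin n)} (hS : S.Nonempty)
    (hS' : Sᶜ.Nonempty) : 1 ≤ eR G S Sᶜ := by
  obtain ⟨a, b, hab, ha, hb⟩ := exists_cross G hconn hS hS'
  have h1 : (1:ℝ) ≤ ∑ j ∈ G.neighborFinset a, (if j ∈ Sᶜ then (1:ℝ) else 0) := by
    refine le_trans ?_ (Finset.single_le_sum (f := fun j => (if j ∈ Sᶜ then (1:ℝ) else 0))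
      (fun j _ => by positivity) (by simp [hab] : b ∈ G.neighborFinset a))
    simp [hb]
  refine le_trans h1 (Finset.single_le_sum
    (f := fun i => ∑ j ∈ G.neighborFinset i, (if j ∈ Sᶜ then (1:ℝ) else 0))
    (fun i _ => Finset.sum_nonneg fun j _ => by positivity) ha)

lemma volR_add_compl (X : Finset (Fin n)) : volR G X + volR G Xᶜ = volR G univ :=
  Finset.sum_add_sum_compl X _

lemma exists_cheeger (hconn : G.Connected) (hn : 2 ≤ n) :
    ∃ S : Finset (Fin n), S.Nonempty ∧ Sᶜ.Nonempty ∧ 2 * volR G S ≤ volR G univ ∧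
      ∀ T : Finset (Fin n), T.Nonempty → Tᶜ.Nonempty →
        eR G S Sᶜ * min (volR G T) (volR G Tᶜ) ≤ eR G T Tᶜ * volR G S := by
  classical
  set ratio : Finset (Fin n) → ℝ :=
    fun T => eR G T Tᶜ / min (volR G T) (volR G Tᶜ) with hratio
  set 𝒮 : Finset (Finset (Fin n)) :=
    univ.filter (fun T => T.Nonempty ∧ Tᶜ.Nonempty) with h𝒮
  have hne : 𝒮.Nonempty := by
    have h2 : 1 < Fintype.card (Fin n) := by simpa using (by omega : 1 < n)
    have hpos : 0 < n := by omega
    set a : Fin n := ⟨0, hpos⟩ with ha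
    obtain ⟨j, hj⟩ := Fintype.exists_ne_of_one_lt_card h2 a
    refine ⟨{a}, ?_⟩
    simp only [h𝒮, Finset.mem_filter, Finset.mem_univ, true_and]
    exact ⟨⟨a, Finset.mem_singleton_self a⟩, ⟨j, by simp [hj]⟩⟩
  obtain ⟨S₀, hS₀mem, hS₀min⟩ := Finset.exists_min_image 𝒮 ratio hne
  rw [h𝒮, Finset.mem_filter] at hS₀mem
  obtain ⟨-, hS₀ne, hS₀cne⟩ := hS₀mem
  by_cases hv : volR G S₀ ≤ volR G S₀ᶜ
  · refine ⟨S₀, hS₀ne, hS₀cne, ?_, ?_⟩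
    · have := volR_add_compl G S₀; linarith
    · intro T hT hTc
      have hrat := hS₀min T (by rw [h𝒮, Finset.mem_filter]; exact ⟨Finset.mem_univ _, hT, hTc⟩)
      rw [hratio] at hrat
      simp only at hrat
      have hminS : min (volR G S₀) (volR G S₀ᶜ) = volR G S₀ := min_eq_left hv
      rw [hminS] at hrat
      have hSpos : 0 < volR G S₀ := volR_pos G hconn hn hS₀ne
      have hTpos : 0 < min (volR G T) (volR G Tᶜ) :=
        lt_min (volR_pos G hconn hn hT) (volR_pos G hconn hn hTc)
      rw [div_le_div_iff₀ hSpos hTpos] at hrat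
      linarith
  · push_neg at hv
    refine ⟨S₀ᶜ, hS₀cne, by simpa using hS₀ne, ?_, ?_⟩
    · have := volR_add_compl G S₀; linarith
    · intro T hT hTc
      have hrat := hS₀min T (by rw [h𝒮, Finset.mem_filter]; exact ⟨Finset.mem_univ _, hT, hTc⟩)
      rw [hratio] at hrat
      simp only at hrat
      have hminS : min (volR G S₀) (volR G S₀ᶜ) = volR G S₀ᶜ := min_eq_right hv.le
      rw [hminS] at hrat
      have hSpos : 0 < volR G S₀ᶜ := volR_pos G hconn hn hS₀cne
      have hTpos : 0 < min (volR G T) (volR G Tᶜ) :=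
        lt_min (volR_pos G hconn hn hT) (volR_pos G hconn hn hTc)
      rw [div_le_div_iff₀ hSpos hTpos] at hrat
      rw [compl_compl, ← eR_symm]
      linarith

lemma sgn_pos {t s : ℝ} (ht : 0 < t) (hs : s ∈ SgnSet t) : s = 1 := by
  simpa [SgnSet, ht] using hs

lemma sgn_neg {t s : ℝ} (ht : t < 0) (hs : s ∈ SgnSet t) : s = -1 := by
  simpa [SgnSet, ht, not_lt.2 ht.le, asymm ht] using hs

lemma sgn_abs_le {t s : ℝ} (hs : s ∈ SgnSet t) : |s| ≤ 1 := by
  rcases lt_trichotomy t 0 with h|h|h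
  · rw [sgn_neg h hs]; simp
  · subst h; simp only [SgnSet, lt_irrefl, if_false] at hs
    rw [abs_le]; exact hs
  · rw [sgn_pos h hs]; simp

lemma sgn_mul {t s : ℝ} (hs : s ∈ SgnSet t) : s * t = |t| := by
  rcases lt_trichotomy t 0 with h|h|h
  · rw [sgn_neg h hs, abs_of_neg h]; ring
  · subst h; simp
  · rw [sgn_pos h hs, abs_of_pos h]; ring

lemma mem_sgn_zero {s : ℝ} (hs : |s| ≤ 1) : s ∈ SgnSet 0 := by
  simp only [SgnSet, lt_irrefl, if_false]
  exact abs_le.1 hs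

lemma mem_sgn_pos {t s : ℝ} (ht : 0 < t) (hs : s = 1) : s ∈ SgnSet t := by
  simp [SgnSet, ht, hs]

lemma mem_sgn_neg {t s : ℝ} (ht : t < 0) (hs : s = -1) : s ∈ SgnSet t := by
  simp [SgnSet, ht, not_lt.2 ht.le, asymm ht, hs]

lemma sign_mul_self (x : ℝ) : (x) * Real.sign x = |x| := by
  rcases lt_trichotomy x 0 with h|h|h
  · rw [Real.sign_of_neg h, abs_of_neg h]; ring
  · simp [h]
  · rw [Real.sign_of_pos h, abs_of_pos h]; ring

lemma abs_sign_le (x : ℝ) : |Real.sign x| ≤ 1 := by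
  rcases lt_trichotomy x 0 with h|h|h
  · rw [Real.sign_of_neg h]; simp
  · simp [h, Real.sign_zero]
  · rw [Real.sign_of_pos h]; simp

lemma abs_split (a b : ℝ) :
    |a - b| = |max a 0 - max b 0| + |max (-a) 0 - max (-b) 0| := by
  rcases le_total 0 a with ha|ha <;> rcases le_total 0 b with hb|hb
  · rw [max_eq_left ha, max_eq_left hb, max_eq_right (by linarith), max_eq_right (by linarith)]
    simp
  · rw [max_eq_left ha, max_eq_right hb, max_eq_right (by linarith), max_eq_left (by linarith),
      abs_of_nonneg (by linarith : (0:ℝ) ≤ a - b), abs_of_nonneg (by linarith : (0:ℝ) ≤ a - 0),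
      abs_of_nonpos (by linarith : 0 - -b ≤ 0)]
    ring
  · rw [max_eq_right ha, max_eq_left hb, max_eq_left (by linarith), max_eq_right (by linarith),
      abs_of_nonpos (by linarith : a - b ≤ 0), abs_of_nonpos (by linarith : 0 - b ≤ 0),
      abs_of_nonneg (by linarith : (0:ℝ) ≤ -a - 0)]
    ring
  · rw [max_eq_right ha, max_eq_right hb, max_eq_left (by linarith), max_eq_left (by linarith)]
    rw [show -a - -b = -(a - b) by ring, abs_neg]
    simp

lemma abs_eq_pos_add_neg (a : ℝ) : |a| = max a 0 + max (-a) 0 := by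
  rcases le_total 0 a with ha|ha
  · rw [max_eq_left ha, max_eq_right (by linarith), abs_of_nonneg ha]; ring
  · rw [max_eq_right ha, max_eq_left (by linarith), abs_of_nonpos ha]; ring

lemma key_abs {t yi yj : ℝ} (ht : 0 < t) (Pi' Pj : Prop) [Decidable Pi'] [Decidable Pj]
    (hyi : 0 ≤ yi) (hyj : 0 ≤ yj) (hi0 : ¬Pi' → yi = 0) (hj0 : ¬Pj → yj = 0) :
    |((if Pi' then t else 0) + yi) - ((if Pj then t else 0) + yj)|
      = t * |(if Pi' then (1:ℝ) else 0) - (if Pj then 1 else 0)| + |yi - yj| := by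
  by_cases hi : Pi' <;> by_cases hj : Pj
  · simp [hi, hj]
  · rw [hj0 hj]
    simp only [hi, hj, if_true, if_false]
    rw [abs_of_nonneg (by linarith : (0:ℝ) ≤ t + yi - (0 + 0)),
      abs_of_nonneg (by norm_num : (0:ℝ) ≤ 1 - 0), abs_of_nonneg (by linarith : (0:ℝ) ≤ yi - 0)]
    ring
  · rw [hi0 hi]
    simp only [hi, hj, if_true, if_false]
    rw [abs_of_nonpos (by linarith : 0 + 0 - (t + yj) ≤ 0),
      abs_of_nonpos (by norm_num : (0:ℝ) - 1 ≤ 0), abs_of_nonpos (by linarith : 0 - yj ≤ 0)]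
    ring
  · simp [hi, hj]

lemma peel (P : Finset (Fin n) → Prop)
    (hmono : ∀ T' T : Finset (Fin n), T' ⊆ T → P T → P T')
    (Φ : (Fin n → ℝ) → ℝ) (hΦ0 : Φ (fun _ => 0) = 0)
    (hadd : ∀ t : ℝ, 0 < t → ∀ T : Finset (Fin n), ∀ y : Fin n → ℝ,
      (∀ i, 0 ≤ y i) → (∀ i, y i ≠ 0 → i ∈ T) →
      Φ (fun i => (if i ∈ T then t else 0) + y i)
        = t * Φ (fun i => if i ∈ T then 1 else 0) + Φ y)
    (hind : ∀ T : Finset (Fin n), P T → 0 ≤ Φ (fun i => if i ∈ T then (1:ℝ) else 0)) :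
    ∀ y : Fin n → ℝ, (∀ i, 0 ≤ y i) → P (univ.filter fun i => y i ≠ 0) → 0 ≤ Φ y := by
  classical
  intro y hy hP
  generalize hc : (univ.filter fun i => y i ≠ 0).card = N
  induction N using Nat.strong_induction_on generalizing y with
  | _ N ih =>
    rcases Finset.eq_empty_or_nonempty (univ.filter fun i => y i ≠ 0) with hemp | hne
    · have hy0 : y = fun _ => 0 := by
        funext i
        by_contra h
        have : i ∈ univ.filter fun i => y i ≠ 0 := by simp [h]
        rw [hemp] at this; exact absurd this (Finset.notMem_empty i)
      rw [hy0, hΦ0]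
    · set T := univ.filter fun i => y i ≠ 0 with hT
      obtain ⟨i0, hi0T, hmin⟩ := Finset.exists_min_image T y hne
      have hti0 : y i0 ≠ 0 := (Finset.mem_filter.1 hi0T).2
      have ht : 0 < y i0 := lt_of_le_of_ne (hy i0) (Ne.symm hti0)
      set t := y i0 with htdef
      set y' : Fin n → ℝ := fun i => y i - (if i ∈ T then t else 0) with hy'
      have hy'nonneg : ∀ i, 0 ≤ y' i := by
        intro i
        by_cases hiT : i ∈ T
        · simp only [hy', hiT, if_true]; have := hmin i hiT; linarith
        · have : y i = 0 := by
            by_contra h; exact hiT (Finset.mem_filter.2 ⟨Finset.mem_univ i, h⟩)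
          simp [hy', hiT, this]
      have hy'supp : ∀ i, y' i ≠ 0 → i ∈ T := by
        intro i h
        by_contra hiT
        have : y i = 0 := by
          by_contra h2; exact hiT (Finset.mem_filter.2 ⟨Finset.mem_univ i, h2⟩)
        exact h (by simp [hy', hiT, this])
      have hkey : y = fun i => (if i ∈ T then t else 0) + y' i := by
        funext i; simp [hy']
      have heq : Φ y = t * Φ (fun i => if i ∈ T then 1 else 0) + Φ y' := by
        rw [hkey]; exact hadd t ht T y' hy'nonneg hy'supp
      have hsub : (univ.filter fun i => y' i ≠ 0) ⊆ T.erase i0 := by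
        intro i hi
        rw [Finset.mem_filter] at hi
        refine Finset.mem_erase.2 ⟨?_, hy'supp i hi.2⟩
        rintro rfl
        exact hi.2 (by simp [hy', hi0T, htdef])
      have hcard : (univ.filter fun i => y' i ≠ 0).card < N := by
        calc (univ.filter fun i => y' i ≠ 0).card ≤ (T.erase i0).card :=
              Finset.card_le_card hsub
          _ < T.card := Finset.card_erase_lt_of_mem hi0T
          _ = N := hc
      have hP' : P (univ.filter fun i => y' i ≠ 0) :=
        hmono _ T (fun i hi => hy'supp i (Finset.mem_filter.1 hi).2) hP
      have h1 : 0 ≤ Φ y' := ih _ hcard y' hy'nonneg hP' rfl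
      have h2 : 0 ≤ Φ (fun i => if i ∈ T then (1:ℝ) else 0) := hind T hP
      rw [heq]
      have := mul_nonneg ht.le h2
      linarith

noncomputable def kp (S : Finset (Fin n)) (y : Fin n → ℝ) (i j : Fin n) : ℝ :=
  if (i ∈ S ↔ j ∈ S) then |y i - y j| else (if i ∈ S then y i - y j else y j - y i)

noncomputable def km (S : Finset (Fin n)) (y : Fin n → ℝ) (i j : Fin n) : ℝ :=
  if (i ∈ S ↔ j ∈ S) then |y i - y j| else (if i ∈ S then y j - y i else y i - y j)

lemma nsum_kp_ind (S T : Finset (Fin n)) :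
    (∑ i, ∑ j ∈ G.neighborFinset i, kp S (fun k => if k ∈ T then (1:ℝ) else 0) i j)
    = eR G (S∩T) (S∩Tᶜ) + eR G (S∩T) (Sᶜ∩Tᶜ)
      + (eR G (S∩Tᶜ) (S∩T) - eR G (S∩Tᶜ) (Sᶜ∩T))
      + (eR G (Sᶜ∩T) (Sᶜ∩Tᶜ) - eR G (Sᶜ∩T) (S∩Tᶜ))
      + (eR G (Sᶜ∩Tᶜ) (Sᶜ∩T) + eR G (Sᶜ∩Tᶜ) (S∩T)) := by
  rw [sum_split univ S]
  simp only [Finset.univ_inter]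
  rw [sum_split S T, sum_split Sᶜ T]
  have hA : ∑ i ∈ S ∩ T, ∑ j ∈ G.neighborFinset i, kp S (fun k => if k ∈ T then (1:ℝ) else 0) i j
      = eR G (S∩T) (S∩Tᶜ) + eR G (S∩T) (Sᶜ∩Tᶜ) := by
    rw [eR, eR, ← Finset.sum_add_distrib]
    refine Finset.sum_congr rfl fun i hi => ?_
    obtain ⟨hiS, hiT⟩ := Finset.mem_inter.1 hi
    rw [← Finset.sum_add_distrib]
    refine Finset.sum_congr rfl fun j _ => ?_
    by_cases hjS : j ∈ S <;> by_cases hjT : j ∈ T <;>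
      simp [kp, hiS, hiT, hjS, hjT, Finset.mem_inter, Finset.mem_compl]
  have hC : ∑ i ∈ S ∩ Tᶜ, ∑ j ∈ G.neighborFinset i, kp S (fun k => if k ∈ T then (1:ℝ) else 0) i j
      = eR G (S∩Tᶜ) (S∩T) - eR G (S∩Tᶜ) (Sᶜ∩T) := by
    rw [eR, eR, ← Finset.sum_sub_distrib]
    refine Finset.sum_congr rfl fun i hi => ?_
    obtain ⟨hiS, hiT⟩ := Finset.mem_inter.1 hi
    rw [Finset.mem_compl] at hiT
    rw [← Finset.sum_sub_distrib]
    refine Finset.sum_congr rfl fun j _ => ?_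
    by_cases hjS : j ∈ S <;> by_cases hjT : j ∈ T <;>
      simp [kp, hiS, hiT, hjS, hjT, Finset.mem_inter, Finset.mem_compl]
  have hB : ∑ i ∈ Sᶜ ∩ T, ∑ j ∈ G.neighborFinset i, kp S (fun k => if k ∈ T then (1:ℝ) else 0) i j
      = eR G (Sᶜ∩T) (Sᶜ∩Tᶜ) - eR G (Sᶜ∩T) (S∩Tᶜ) := by
    rw [eR, eR, ← Finset.sum_sub_distrib]
    refine Finset.sum_congr rfl fun i hi => ?_
    obtain ⟨hiS, hiT⟩ := Finset.mem_inter.1 hi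
    rw [Finset.mem_compl] at hiS
    rw [← Finset.sum_sub_distrib]
    refine Finset.sum_congr rfl fun j _ => ?_
    by_cases hjS : j ∈ S <;> by_cases hjT : j ∈ T <;>
      simp [kp, hiS, hiT, hjS, hjT, Finset.mem_inter, Finset.mem_compl]
  have hD : ∑ i ∈ Sᶜ ∩ Tᶜ, ∑ j ∈ G.neighborFinset i, kp S (fun k => if k ∈ T then (1:ℝ) else 0) i j
      = eR G (Sᶜ∩Tᶜ) (Sᶜ∩T) + eR G (Sᶜ∩Tᶜ) (S∩T) := by
    rw [eR, eR, ← Finset.sum_add_distrib]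
    refine Finset.sum_congr rfl fun i hi => ?_
    obtain ⟨hiS, hiT⟩ := Finset.mem_inter.1 hi
    rw [Finset.mem_compl] at hiS hiT
    rw [← Finset.sum_add_distrib]
    refine Finset.sum_congr rfl fun j _ => ?_
    by_cases hjS : j ∈ S <;> by_cases hjT : j ∈ T <;>
      simp [kp, hiS, hiT, hjS, hjT, Finset.mem_inter, Finset.mem_compl]
  rw [hA, hC, hB, hD]; ring

lemma nsum_km_ind (S T : Finset (Fin n)) :
    (∑ i, ∑ j ∈ G.neighborFinset i, km S (fun k => if k ∈ T then (1:ℝ) else 0) i j)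
    = (eR G (S∩T) (S∩Tᶜ) - eR G (S∩T) (Sᶜ∩Tᶜ))
      + (eR G (S∩Tᶜ) (S∩T) + eR G (S∩Tᶜ) (Sᶜ∩T))
      + (eR G (Sᶜ∩T) (Sᶜ∩Tᶜ) + eR G (Sᶜ∩T) (S∩Tᶜ))
      + (eR G (Sᶜ∩Tᶜ) (Sᶜ∩T) - eR G (Sᶜ∩Tᶜ) (S∩T)) := by
  rw [sum_split univ S]
  simp only [Finset.univ_inter]
  rw [sum_split S T, sum_split Sᶜ T]
  have hA : ∑ i ∈ S ∩ T, ∑ j ∈ G.neighborFinset i, km S (fun k => if k ∈ T then (1:ℝ) else 0) i j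
      = eR G (S∩T) (S∩Tᶜ) - eR G (S∩T) (Sᶜ∩Tᶜ) := by
    rw [eR, eR, ← Finset.sum_sub_distrib]
    refine Finset.sum_congr rfl fun i hi => ?_
    obtain ⟨hiS, hiT⟩ := Finset.mem_inter.1 hi
    rw [← Finset.sum_sub_distrib]
    refine Finset.sum_congr rfl fun j _ => ?_
    by_cases hjS : j ∈ S <;> by_cases hjT : j ∈ T <;>
      simp [km, hiS, hiT, hjS, hjT, Finset.mem_inter, Finset.mem_compl]
  have hC : ∑ i ∈ S ∩ Tᶜ, ∑ j ∈ G.neighborFinset i, km S (fun k => if k ∈ T then (1:ℝ) else 0) i j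
      = eR G (S∩Tᶜ) (S∩T) + eR G (S∩Tᶜ) (Sᶜ∩T) := by
    rw [eR, eR, ← Finset.sum_add_distrib]
    refine Finset.sum_congr rfl fun i hi => ?_
    obtain ⟨hiS, hiT⟩ := Finset.mem_inter.1 hi
    rw [Finset.mem_compl] at hiT
    rw [← Finset.sum_add_distrib]
    refine Finset.sum_congr rfl fun j _ => ?_
    by_cases hjS : j ∈ S <;> by_cases hjT : j ∈ T <;>
      simp [km, hiS, hiT, hjS, hjT, Finset.mem_inter, Finset.mem_compl]
  have hB : ∑ i ∈ Sᶜ ∩ T, ∑ j ∈ G.neighborFinset i, km S (fun k => if k ∈ T then (1:ℝ) else 0) i j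
      = eR G (Sᶜ∩T) (Sᶜ∩Tᶜ) + eR G (Sᶜ∩T) (S∩Tᶜ) := by
    rw [eR, eR, ← Finset.sum_add_distrib]
    refine Finset.sum_congr rfl fun i hi => ?_
    obtain ⟨hiS, hiT⟩ := Finset.mem_inter.1 hi
    rw [Finset.mem_compl] at hiS
    rw [← Finset.sum_add_distrib]
    refine Finset.sum_congr rfl fun j _ => ?_
    by_cases hjS : j ∈ S <;> by_cases hjT : j ∈ T <;>
      simp [km, hiS, hiT, hjS, hjT, Finset.mem_inter, Finset.mem_compl]
  have hD : ∑ i ∈ Sᶜ ∩ Tᶜ, ∑ j ∈ G.neighborFinset i, km S (fun k => if k ∈ T then (1:ℝ) else 0) i j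
      = eR G (Sᶜ∩Tᶜ) (Sᶜ∩T) - eR G (Sᶜ∩Tᶜ) (S∩T) := by
    rw [eR, eR, ← Finset.sum_sub_distrib]
    refine Finset.sum_congr rfl fun i hi => ?_
    obtain ⟨hiS, hiT⟩ := Finset.mem_inter.1 hi
    rw [Finset.mem_compl] at hiS hiT
    rw [← Finset.sum_sub_distrib]
    refine Finset.sum_congr rfl fun j _ => ?_
    by_cases hjS : j ∈ S <;> by_cases hjT : j ∈ T <;>
      simp [km, hiS, hiT, hjS, hjT, Finset.mem_inter, Finset.mem_compl]
  rw [hA, hC, hB, hD]; ring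

lemma energy_ind (T : Finset (Fin n)) :
    energy G (fun k => if k ∈ T then (1:ℝ) else 0) = eR G T Tᶜ := by
  rw [energy, sum_split univ T]
  simp only [Finset.univ_inter]
  have hT : ∑ i ∈ T, ∑ j ∈ G.neighborFinset i,
      |(if i ∈ T then (1:ℝ) else 0) - (if j ∈ T then (1:ℝ) else 0)| = eR G T Tᶜ := by
    rw [eR]
    refine Finset.sum_congr rfl fun i hi => ?_
    refine Finset.sum_congr rfl fun j _ => ?_
    by_cases hjT : j ∈ T <;> simp [hi, hjT]
  have hTc : ∑ i ∈ Tᶜ, ∑ j ∈ G.neighborFinset i,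
      |(if i ∈ T then (1:ℝ) else 0) - (if j ∈ T then (1:ℝ) else 0)| = eR G Tᶜ T := by
    rw [eR]
    refine Finset.sum_congr rfl fun i hi => ?_
    rw [Finset.mem_compl] at hi
    refine Finset.sum_congr rfl fun j _ => ?_
    by_cases hjT : j ∈ T <;> simp [hi, hjT]
  rw [hT, hTc, eR_symm]; ring

lemma eR_empty_right (X : Finset (Fin n)) : eR G X ∅ = 0 := by
  simp [eR]

lemma volR_union {X Y : Finset (Fin n)} (h : Disjoint X Y) :
    volR G (X ∪ Y) = volR G X + volR G Y := Finset.sum_union h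


section withS
variable (S : Finset (Fin n)) (μ : ℝ) (hμ : 0 ≤ μ)
  (hcutS : eR G S Sᶜ = μ * volR G S)
  (h2 : 2 * volR G S ≤ volR G univ)
  (hS : S.Nonempty)
  (hminG : ∀ T : Finset (Fin n), T.Nonempty → Tᶜ.Nonempty →
    μ * min (volR G T) (volR G Tᶜ) ≤ eR G T Tᶜ)
  (hminT : ∀ T : Finset (Fin n), 2 * volR G T ≤ volR G univ → μ * volR G T ≤ eR G T Tᶜ)

include hμ hcutS h2 hS hminG in
lemma claimC1 : ∀ Bb ⊆ Sᶜ, eR G Bb S ≤ eR G Bb (Sᶜ \ Bb) + μ * volR G Bb := by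
  intro Bb hsub
  by_cases hBb : Bb = Sᶜ
  · subst hBb
    rw [Finset.sdiff_self, eR_empty_right, eR_symm, hcutS]
    have hvc := volR_add_compl G Sᶜ
    rw [compl_compl] at hvc
    nlinarith [volR_nonneg G S, volR_nonneg G Sᶜ]
  · have hssub : Bb ⊂ Sᶜ := lt_of_le_of_ne hsub hBb
    obtain ⟨d, hdSc, hdBb⟩ := Finset.exists_of_ssubset hssub
    set D := Sᶜ \ Bb with hD
    have hUc : (S ∪ Bb)ᶜ = D := by
      ext i; simp only [Finset.mem_compl, Finset.mem_union, hD, Finset.mem_sdiff]; tauto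
    have hdisj : Disjoint S Bb := by
      rw [Finset.disjoint_left]; intro a ha hab
      exact (Finset.mem_compl.1 (hsub hab)) ha
    have hdisj2 : Disjoint Bb D := Finset.disjoint_sdiff
    have hScBD : Sᶜ = Bb ∪ D := by
      ext i; simp only [Finset.mem_union, hD, Finset.mem_sdiff]; tauto
    have hU := hminG (S ∪ Bb) ⟨hS.choose, Finset.mem_union_left _ hS.choose_spec⟩
      (by rw [hUc]; exact ⟨d, Finset.mem_sdiff.2 ⟨hdSc, hdBb⟩⟩)
    rw [hUc, eR_union_left G hdisj] at hU
    have hSD : eR G S Sᶜ = eR G S Bb + eR G S D := by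
      rw [hScBD] at hcutS ⊢
      exact eR_union_right G S hdisj2
    have hvolU : volR G (S ∪ Bb) = volR G S + volR G Bb := volR_union G hdisj
    have hvolsplit : volR G (S ∪ Bb) + volR G D = volR G univ := by
      rw [← hUc]; exact volR_add_compl G _
    have hmin_ge : volR G S - volR G Bb ≤ min (volR G (S ∪ Bb)) (volR G ((S ∪ Bb)ᶜ)) := by
      rw [hUc]
      refine le_min ?_ ?_
      · rw [hvolU]; nlinarith [volR_nonneg G Bb]
      · nlinarith
    have hstep : μ * (volR G S - volR G Bb) ≤ eR G S D + eR G Bb D := by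
      calc μ * (volR G S - volR G Bb) ≤ μ * min (volR G (S ∪ Bb)) (volR G ((S ∪ Bb)ᶜ)) :=
            mul_le_mul_of_nonneg_left hmin_ge hμ
        _ ≤ eR G S D + eR G Bb D := by rw [hUc]; exact hU
    have hSB : eR G S Bb = eR G S Sᶜ - eR G S D := by rw [hSD]; ring
    rw [eR_symm, hSB, hcutS]
    nlinarith

end withS

section blocks2
variable (S : Finset (Fin n)) (μ : ℝ) (hμ : 0 ≤ μ)
  (hcutS : eR G S Sᶜ = μ * volR G S)
  (h2 : 2 * volR G S ≤ volR G univ)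
  (hminT : ∀ T : Finset (Fin n), 2 * volR G T ≤ volR G univ → μ * volR G T ≤ eR G T Tᶜ)
  (hC1 : ∀ Bb ⊆ Sᶜ, eR G Bb S ≤ eR G Bb (Sᶜ \ Bb) + μ * volR G Bb)

variable (T : Finset (Fin n))

-- abbreviations and set facts
include h2 in
lemma volA_le : 2 * volR G (S∩T) ≤ volR G univ :=
  le_trans (by nlinarith [volR_mono G (Finset.inter_subset_left : S∩T ⊆ S)]) h2

include h2 in
lemma volC_le : 2 * volR G (S∩Tᶜ) ≤ volR G univ :=
  le_trans (by nlinarith [volR_mono G (Finset.inter_subset_left : S∩Tᶜ ⊆ S)]) h2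

lemma setAc : (S∩T)ᶜ = (Sᶜ∩T) ∪ ((S∩Tᶜ) ∪ (Sᶜ∩Tᶜ)) := by
  ext i
  simp only [Finset.mem_compl, Finset.mem_inter, Finset.mem_union]
  tauto

lemma setCc : (S∩Tᶜ)ᶜ = (S∩T) ∪ ((Sᶜ∩T) ∪ (Sᶜ∩Tᶜ)) := by
  ext i
  simp only [Finset.mem_compl, Finset.mem_inter, Finset.mem_union]
  tauto

lemma setS_eq : S = (S∩T) ∪ (S∩Tᶜ) := by
  ext i; simp only [Finset.mem_inter, Finset.mem_union, Finset.mem_compl]; tauto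

lemma setSc_eq : Sᶜ = (Sᶜ∩T) ∪ (Sᶜ∩Tᶜ) := by
  ext i; simp only [Finset.mem_inter, Finset.mem_union, Finset.mem_compl]; tauto

lemma setD_eq : Sᶜ \ (Sᶜ∩T) = Sᶜ∩Tᶜ := by
  ext i; simp only [Finset.mem_sdiff, Finset.mem_inter, Finset.mem_compl]; tauto

lemma disjAC : Disjoint (S∩T) (S∩Tᶜ) := by
  rw [Finset.disjoint_left]
  intro a ha hb
  exact (Finset.mem_compl.1 (Finset.mem_inter.1 hb).2) (Finset.mem_inter.1 ha).2

lemma disjBD : Disjoint (Sᶜ∩T) (Sᶜ∩Tᶜ) := by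
  rw [Finset.disjoint_left]
  intro a ha hb
  exact (Finset.mem_compl.1 (Finset.mem_inter.1 hb).2) (Finset.mem_inter.1 ha).2

lemma disjCD : Disjoint (S∩Tᶜ) (Sᶜ∩Tᶜ) := by
  rw [Finset.disjoint_left]
  intro a ha hb
  exact (Finset.mem_compl.1 (Finset.mem_inter.1 hb).1) (Finset.mem_inter.1 ha).1

lemma disjAB : Disjoint (S∩T) (Sᶜ∩T) := by
  rw [Finset.disjoint_left]
  intro a ha hb
  exact (Finset.mem_compl.1 (Finset.mem_inter.1 hb).1) (Finset.mem_inter.1 ha).1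

lemma disjB_CD : Disjoint (Sᶜ∩T) ((S∩Tᶜ) ∪ (Sᶜ∩Tᶜ)) := by
  rw [Finset.disjoint_left]
  intro a ha hb
  rcases Finset.mem_union.1 hb with h | h
  · exact (Finset.mem_compl.1 (Finset.mem_inter.1 ha).1) (Finset.mem_inter.1 h).1
  · exact (Finset.mem_compl.1 (Finset.mem_inter.1 h).2) (Finset.mem_inter.1 ha).2

lemma disjA_BD : Disjoint (S∩T) ((Sᶜ∩T) ∪ (Sᶜ∩Tᶜ)) := by
  rw [Finset.disjoint_left]
  intro a ha hb
  rcases Finset.mem_union.1 hb with h | h <;>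
    exact (Finset.mem_compl.1 (Finset.mem_inter.1 h).1) (Finset.mem_inter.1 ha).1

include hμ h2 hminT hC1 in
lemma phiP_ind :
    0 ≤ (∑ i, ∑ j ∈ G.neighborFinset i, kp S (fun k => if k ∈ T then (1:ℝ) else 0) i j)
      - 2*μ*(volR G (S∩T)) + 2*μ*(volR G (Sᶜ∩T)) := by
  rw [nsum_kp_ind]
  have hC2A : μ * volR G (S∩T) ≤ eR G (S∩T) (S∩T)ᶜ := hminT _ (volA_le G S h2 T)
  have hAcsplit : eR G (S∩T) (S∩T)ᶜ
      = eR G (S∩T) (Sᶜ∩T) + (eR G (S∩T) (S∩Tᶜ) + eR G (S∩T) (Sᶜ∩Tᶜ)) := by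
    rw [setAc, eR_union_right G _ (disjB_CD S T), eR_union_right G _ (disjCD S T)]
  have hC1B := hC1 (Sᶜ∩T) Finset.inter_subset_left
  rw [setD_eq] at hC1B
  have hBS : eR G (Sᶜ∩T) S = eR G (Sᶜ∩T) (S∩T) + eR G (Sᶜ∩T) (S∩Tᶜ) := by
    have h := eR_union_right G (Sᶜ∩T) (disjAC S T)
    rwa [← setS_eq S T] at h
  have s1 : eR G (S∩Tᶜ) (S∩T) = eR G (S∩T) (S∩Tᶜ) := eR_symm G _ _
  have s2 : eR G (Sᶜ∩Tᶜ) (S∩T) = eR G (S∩T) (Sᶜ∩Tᶜ) := eR_symm G _ _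
  have s3 : eR G (Sᶜ∩Tᶜ) (Sᶜ∩T) = eR G (Sᶜ∩T) (Sᶜ∩Tᶜ) := eR_symm G _ _
  have s4 : eR G (S∩Tᶜ) (Sᶜ∩T) = eR G (Sᶜ∩T) (S∩Tᶜ) := eR_symm G _ _
  have s5 : eR G (S∩T) (Sᶜ∩T) = eR G (Sᶜ∩T) (S∩T) := eR_symm G _ _
  have hmb : 0 ≤ μ * volR G (Sᶜ∩T) := mul_nonneg hμ (volR_nonneg G _)
  linarith

include hμ hcutS h2 hminT in
lemma phiM_ind (T : Finset (Fin n)) :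
    0 ≤ (∑ i, ∑ j ∈ G.neighborFinset i, km S (fun k => if k ∈ T then (1:ℝ) else 0) i j)
      + 2*μ*(volR G (S∩T)) + 2*μ*(volR G (Sᶜ∩T)) := by
  rw [nsum_km_ind]
  have hsplit1 : eR G S Sᶜ = eR G (S∩T) Sᶜ + eR G (S∩Tᶜ) Sᶜ := by
    have h := eR_union_left G (disjAC S T) Sᶜ
    rwa [← setS_eq S T] at h
  have hsplit2 : eR G (S∩T) Sᶜ = eR G (S∩T) (Sᶜ∩T) + eR G (S∩T) (Sᶜ∩Tᶜ) := by
    have h := eR_union_right G (S∩T) (disjBD S T)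
    rwa [← setSc_eq S T] at h
  have hsplit3 : eR G (S∩Tᶜ) Sᶜ = eR G (S∩Tᶜ) (Sᶜ∩T) + eR G (S∩Tᶜ) (Sᶜ∩Tᶜ) := by
    have h := eR_union_right G (S∩Tᶜ) (disjBD S T)
    rwa [← setSc_eq S T] at h
  have hvolS : volR G S = volR G (S∩T) + volR G (S∩Tᶜ) := by
    have h := volR_union G (disjAC S T)
    rwa [← setS_eq S T] at h
  have hC2C : μ * volR G (S∩Tᶜ) ≤ eR G (S∩Tᶜ) (S∩Tᶜ)ᶜ := hminT _ (volC_le G S h2 T)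
  have hCcsplit : eR G (S∩Tᶜ) (S∩Tᶜ)ᶜ
      = eR G (S∩Tᶜ) (S∩T) + (eR G (S∩Tᶜ) (Sᶜ∩T) + eR G (S∩Tᶜ) (Sᶜ∩Tᶜ)) := by
    rw [setCc, eR_union_right G _ (disjA_BD S T), eR_union_right G _ (disjBD S T)]
  have s1 : eR G (S∩Tᶜ) (S∩T) = eR G (S∩T) (S∩Tᶜ) := eR_symm G _ _
  have s2 : eR G (Sᶜ∩Tᶜ) (S∩T) = eR G (S∩T) (Sᶜ∩Tᶜ) := eR_symm G _ _
  have s3 : eR G (Sᶜ∩Tᶜ) (Sᶜ∩T) = eR G (Sᶜ∩T) (Sᶜ∩Tᶜ) := eR_symm G _ _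
  have s4 : eR G (S∩Tᶜ) (Sᶜ∩T) = eR G (Sᶜ∩T) (S∩Tᶜ) := eR_symm G _ _
  have s5 : eR G (S∩Tᶜ) (Sᶜ∩Tᶜ) = eR G (Sᶜ∩Tᶜ) (S∩Tᶜ) := eR_symm G _ _
  have n1 : 0 ≤ eR G (S∩T) (Sᶜ∩T) := eR_nonneg G _ _
  have n2 : 0 ≤ eR G (Sᶜ∩T) (Sᶜ∩Tᶜ) := eR_nonneg G _ _
  have n3 : 0 ≤ eR G (Sᶜ∩T) (S∩Tᶜ) := eR_nonneg G _ _
  have n4 : 0 ≤ μ * volR G (Sᶜ∩T) := mul_nonneg hμ (volR_nonneg G _)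
  have n5 : 0 ≤ μ * volR G (S∩T) := mul_nonneg hμ (volR_nonneg G _)
  have e1 : 2*μ*volR G (S∩T) = 2*(μ*volR G (S∩T)) := by ring
  have e2 : 2*μ*volR G (Sᶜ∩T) = 2*(μ*volR G (Sᶜ∩T)) := by ring
  have e3 : μ * volR G S = μ * volR G (S∩T) + μ * volR G (S∩Tᶜ) := by rw [hvolS]; ring
  linarith

end blocks2

lemma lin_ind (X T : Finset (Fin n)) :
    ∑ i ∈ X, (G.degree i : ℝ) * (if i ∈ T then (1:ℝ) else 0) = volR G (X ∩ T) := by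
  rw [volR, ← Finset.sum_ite_mem X T]
  refine Finset.sum_congr rfl fun i _ => ?_
  by_cases hi : i ∈ T <;> simp [hi]

lemma lin_add (X T : Finset (Fin n)) (t : ℝ) (y : Fin n → ℝ) :
    ∑ i ∈ X, (G.degree i : ℝ) * ((if i ∈ T then t else 0) + y i)
      = t * (∑ i ∈ X, (G.degree i : ℝ) * (if i ∈ T then (1:ℝ) else 0))
        + ∑ i ∈ X, (G.degree i : ℝ) * y i := by
  rw [Finset.mul_sum, ← Finset.sum_add_distrib]
  refine Finset.sum_congr rfl fun i _ => ?_
  by_cases hi : i ∈ T <;> simp [hi] <;> ring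

lemma nsum_two_split (f g : Fin n → Fin n → ℝ) (t : ℝ) :
    ∑ i, ∑ j ∈ G.neighborFinset i, (t * f i j + g i j)
      = t * (∑ i, ∑ j ∈ G.neighborFinset i, f i j) + ∑ i, ∑ j ∈ G.neighborFinset i, g i j := by
  simp only [Finset.sum_add_distrib, Finset.mul_sum]

lemma energy_add {t : ℝ} (ht : 0 < t) (T : Finset (Fin n)) (y : Fin n → ℝ)
    (hy : ∀ i, 0 ≤ y i) (hsupp : ∀ i, y i ≠ 0 → i ∈ T) :
    energy G (fun i => (if i ∈ T then t else 0) + y i)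
      = t * energy G (fun i => if i ∈ T then (1:ℝ) else 0) + energy G y := by
  have hzero : ∀ i, i ∉ T → y i = 0 := fun i hi => by
    by_contra h; exact hi (hsupp i h)
  rw [energy, energy, energy]
  have h : ∀ i j : Fin n,
      |((if i ∈ T then t else 0) + y i) - ((if j ∈ T then t else 0) + y j)|
        = t * |(if i ∈ T then (1:ℝ) else 0) - (if j ∈ T then 1 else 0)| + |y i - y j| :=
    fun i j => key_abs ht (i ∈ T) (j ∈ T) (hy i) (hy j) (hzero i) (hzero j)
  calc (1/2 : ℝ) * ∑ i, ∑ j ∈ G.neighborFinset i,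
        |((if i ∈ T then t else 0) + y i) - ((if j ∈ T then t else 0) + y j)|
      = (1/2 : ℝ) * ∑ i, ∑ j ∈ G.neighborFinset i,
          (t * |(if i ∈ T then (1:ℝ) else 0) - (if j ∈ T then 1 else 0)| + |y i - y j|) := by
        congr 1
        exact Finset.sum_congr rfl fun i _ => Finset.sum_congr rfl fun j _ => h i j
    _ = (1/2 : ℝ) * (t * (∑ i, ∑ j ∈ G.neighborFinset i,
          |(if i ∈ T then (1:ℝ) else 0) - (if j ∈ T then 1 else 0)|)
        + ∑ i, ∑ j ∈ G.neighborFinset i, |y i - y j|) := by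
        rw [nsum_two_split G]
    _ = t * ((1/2 : ℝ) * ∑ i, ∑ j ∈ G.neighborFinset i,
          |(if i ∈ T then (1:ℝ) else 0) - (if j ∈ T then 1 else 0)|)
        + (1/2 : ℝ) * ∑ i, ∑ j ∈ G.neighborFinset i, |y i - y j| := by ring

lemma kp_add {S : Finset (Fin n)} {t : ℝ} (ht : 0 < t) (T : Finset (Fin n)) (y : Fin n → ℝ)
    (hy : ∀ i, 0 ≤ y i) (hsupp : ∀ i, y i ≠ 0 → i ∈ T) (i j : Fin n) :
    kp S (fun k => (if k ∈ T then t else 0) + y k) i j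
      = t * kp S (fun k => if k ∈ T then (1:ℝ) else 0) i j + kp S y i j := by
  have hzero : ∀ i, i ∉ T → y i = 0 := fun i hi => by
    by_contra h; exact hi (hsupp i h)
  by_cases hss : (i ∈ S ↔ j ∈ S)
  · simp only [kp, hss, if_true]
    exact key_abs ht (i ∈ T) (j ∈ T) (hy i) (hy j) (hzero i) (hzero j)
  · simp only [kp, hss, if_false]
    by_cases hiS : i ∈ S <;> simp only [hiS, if_true, if_false] <;>
      by_cases hiT : i ∈ T <;> by_cases hjT : j ∈ T <;> simp [hiT, hjT] <;> ring

lemma km_add {S : Finset (Fin n)} {t : ℝ} (ht : 0 < t) (T : Finset (Fin n)) (y : Fin n → ℝ)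
    (hy : ∀ i, 0 ≤ y i) (hsupp : ∀ i, y i ≠ 0 → i ∈ T) (i j : Fin n) :
    km S (fun k => (if k ∈ T then t else 0) + y k) i j
      = t * km S (fun k => if k ∈ T then (1:ℝ) else 0) i j + km S y i j := by
  have hzero : ∀ i, i ∉ T → y i = 0 := fun i hi => by
    by_contra h; exact hi (hsupp i h)
  by_cases hss : (i ∈ S ↔ j ∈ S)
  · simp only [km, hss, if_true]
    exact key_abs ht (i ∈ T) (j ∈ T) (hy i) (hy j) (hzero i) (hzero j)
  · simp only [km, hss, if_false]
    by_cases hiS : i ∈ S <;> simp only [hiS, if_true, if_false] <;>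
      by_cases hiT : i ∈ T <;> by_cases hjT : j ∈ T <;> simp [hiT, hjT] <;> ring

lemma coarea (μ : ℝ)
    (hminT : ∀ T : Finset (Fin n), 2 * volR G T ≤ volR G univ → μ * volR G T ≤ eR G T Tᶜ) :
    ∀ y : Fin n → ℝ, (∀ i, 0 ≤ y i) →
      2 * volR G (univ.filter fun i => y i ≠ 0) ≤ volR G univ →
      μ * (∑ i, (G.degree i : ℝ) * y i) ≤ energy G y := by
  intro y hy hvol
  have h : 0 ≤ energy G y - μ * ∑ i, (G.degree i : ℝ) * y i := by
    refine peel (fun T => 2 * volR G T ≤ volR G univ) ?hmono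
      (fun v => energy G v - μ * ∑ i, (G.degree i : ℝ) * v i) ?h0 ?hadd ?hind y hy hvol
    case hmono => intro T' T hsub hP; nlinarith [volR_mono G hsub]
    case h0 => simp [energy]
    case hadd =>
      intro t ht T v hv hsupp
      simp only
      rw [energy_add G ht T v hv hsupp, lin_add G univ T t v]
      ring
    case hind =>
      intro T hP
      simp only
      have h1 := energy_ind G T
      have h2 := lin_ind G univ T
      rw [Finset.univ_inter] at h2
      rw [h1, h2]
      have := hminT T hP
      linarith
  linarith

section mi
variable (S : Finset (Fin n)) (μ : ℝ)
  (hphiP_ind : ∀ T : Finset (Fin n),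
    0 ≤ (∑ i, ∑ j ∈ G.neighborFinset i, kp S (fun k => if k ∈ T then (1:ℝ) else 0) i j)
      - 2*μ*(volR G (S∩T)) + 2*μ*(volR G (Sᶜ∩T)))
  (hphiM_ind : ∀ T : Finset (Fin n),
    0 ≤ (∑ i, ∑ j ∈ G.neighborFinset i, km S (fun k => if k ∈ T then (1:ℝ) else 0) i j)
      + 2*μ*(volR G (S∩T)) + 2*μ*(volR G (Sᶜ∩T)))

include hphiP_ind in
lemma phiP_nonneg : ∀ y : Fin n → ℝ, (∀ i, 0 ≤ y i) →
    0 ≤ (∑ i, ∑ j ∈ G.neighborFinset i, kp S y i j)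
      - 2*μ*(∑ i ∈ S, (G.degree i : ℝ) * y i) + 2*μ*(∑ i ∈ Sᶜ, (G.degree i : ℝ) * y i) := by
  intro y hy
  refine peel (fun _ => True) (fun _ _ _ _ => trivial)
    (fun v => (∑ i, ∑ j ∈ G.neighborFinset i, kp S v i j)
      - 2*μ*(∑ i ∈ S, (G.degree i : ℝ) * v i) + 2*μ*(∑ i ∈ Sᶜ, (G.degree i : ℝ) * v i))
    ?h0 ?hadd ?hind y hy trivial
  case h0 =>
    have : ∀ i j : Fin n, kp S (fun _ => (0:ℝ)) i j = 0 := by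
      intro i j
      by_cases hss : (i ∈ S ↔ j ∈ S) <;> by_cases hiS : i ∈ S <;> simp [kp, hss, hiS]
    simp only [this]
    simp
  case hadd =>
    intro t ht T v hv hsupp
    simp only
    have hpt : ∀ i j : Fin n, kp S (fun k => (if k ∈ T then t else 0) + v k) i j
        = t * kp S (fun k => if k ∈ T then (1:ℝ) else 0) i j + kp S v i j :=
      fun i j => kp_add ht T v hv hsupp i j
    rw [Finset.sum_congr rfl fun i _ => Finset.sum_congr rfl fun j _ => hpt i j,
      nsum_two_split G, lin_add G S T t v, lin_add G Sᶜ T t v]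
    ring
  case hind =>
    intro T _
    simp only
    have := hphiP_ind T
    rw [lin_ind G S T, lin_ind G Sᶜ T]
    linarith

include hphiM_ind in
lemma phiM_nonneg : ∀ y : Fin n → ℝ, (∀ i, 0 ≤ y i) →
    0 ≤ (∑ i, ∑ j ∈ G.neighborFinset i, km S y i j)
      + 2*μ*(∑ i ∈ S, (G.degree i : ℝ) * y i) + 2*μ*(∑ i ∈ Sᶜ, (G.degree i : ℝ) * y i) := by
  intro y hy
  refine peel (fun _ => True) (fun _ _ _ _ => trivial)
    (fun v => (∑ i, ∑ j ∈ G.neighborFinset i, km S v i j)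
      + 2*μ*(∑ i ∈ S, (G.degree i : ℝ) * v i) + 2*μ*(∑ i ∈ Sᶜ, (G.degree i : ℝ) * v i))
    ?h0 ?hadd ?hind y hy trivial
  case h0 =>
    have : ∀ i j : Fin n, km S (fun _ => (0:ℝ)) i j = 0 := by
      intro i j
      by_cases hss : (i ∈ S ↔ j ∈ S) <;> by_cases hiS : i ∈ S <;> simp [km, hss, hiS]
    simp only [this]
    simp
  case hadd =>
    intro t ht T v hv hsupp
    simp only
    have hpt : ∀ i j : Fin n, km S (fun k => (if k ∈ T then t else 0) + v k) i j
        = t * km S (fun k => if k ∈ T then (1:ℝ) else 0) i j + km S v i j :=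
      fun i j => km_add ht T v hv hsupp i j
    rw [Finset.sum_congr rfl fun i _ => Finset.sum_congr rfl fun j _ => hpt i j,
      nsum_two_split G, lin_add G S T t v, lin_add G Sᶜ T t v]
    ring
  case hind =>
    intro T _
    simp only
    have := hphiM_ind T
    rw [lin_ind G S T, lin_ind G Sᶜ T]
    linarith

include hphiP_ind hphiM_ind in
lemma MI (c : Fin n → ℝ) :
    2*μ*(∑ i ∈ S, (G.degree i : ℝ) * c i) - 2*μ*(∑ i ∈ Sᶜ, (G.degree i : ℝ) * |c i|)
      ≤ ∑ i, ∑ j ∈ G.neighborFinset i, kp S c i j := by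
  set cp : Fin n → ℝ := fun i => max (c i) 0 with hcp
  set cm : Fin n → ℝ := fun i => max (-(c i)) 0 with hcm
  have hcpnn : ∀ i, 0 ≤ cp i := fun i => le_max_right _ _
  have hcmnn : ∀ i, 0 ≤ cm i := fun i => le_max_right _ _
  have hc : ∀ i, c i = cp i - cm i := by
    intro i
    rcases le_total 0 (c i) with h|h
    · simp [hcp, hcm, max_eq_left h, max_eq_right (by linarith : -(c i) ≤ 0)]
    · simp [hcp, hcm, max_eq_right h, max_eq_left (by linarith : (0:ℝ) ≤ -(c i))]
  have habs : ∀ i, |c i| = cp i + cm i := fun i => abs_eq_pos_add_neg (c i)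
  have hkdec : ∀ i j, kp S c i j = kp S cp i j + km S cm i j := by
    intro i j
    by_cases hss : (i ∈ S ↔ j ∈ S)
    · simp only [kp, km, hss, if_true]
      exact abs_split (c i) (c j)
    · simp only [kp, km, hss, if_false]
      by_cases hiS : i ∈ S <;> simp only [hiS, if_true, if_false] <;>
        rw [hc i, hc j] <;> ring
  have hsum : (∑ i, ∑ j ∈ G.neighborFinset i, kp S c i j)
      = (∑ i, ∑ j ∈ G.neighborFinset i, kp S cp i j)
        + ∑ i, ∑ j ∈ G.neighborFinset i, km S cm i j := by
    rw [← Finset.sum_add_distrib]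
    refine Finset.sum_congr rfl fun i _ => ?_
    rw [← Finset.sum_add_distrib]
    exact Finset.sum_congr rfl fun j _ => hkdec i j
  have hP := phiP_nonneg G S μ hphiP_ind cp hcpnn
  have hM := phiM_nonneg G S μ hphiM_ind cm hcmnn
  have hlin1 : ∑ i ∈ S, (G.degree i : ℝ) * c i
      = (∑ i ∈ S, (G.degree i : ℝ) * cp i) - ∑ i ∈ S, (G.degree i : ℝ) * cm i := by
    rw [← Finset.sum_sub_distrib]
    refine Finset.sum_congr rfl fun i _ => ?_
    rw [hc i]; ring
  have hlin2 : ∑ i ∈ Sᶜ, (G.degree i : ℝ) * |c i|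
      = (∑ i ∈ Sᶜ, (G.degree i : ℝ) * cp i) + ∑ i ∈ Sᶜ, (G.degree i : ℝ) * cm i := by
    rw [← Finset.sum_add_distrib]
    refine Finset.sum_congr rfl fun i _ => ?_
    rw [habs i]; ring
  have e1 : 2*μ*(∑ i ∈ S, (G.degree i : ℝ) * c i)
      = 2*μ*(∑ i ∈ S, (G.degree i : ℝ) * cp i) - 2*μ*(∑ i ∈ S, (G.degree i : ℝ) * cm i) := by
    rw [hlin1]; ring
  have e2 : 2*μ*(∑ i ∈ Sᶜ, (G.degree i : ℝ) * |c i|)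
      = 2*μ*(∑ i ∈ Sᶜ, (G.degree i : ℝ) * cp i) + 2*μ*(∑ i ∈ Sᶜ, (G.degree i : ℝ) * cm i) := by
    rw [hlin2]; ring
  linarith

end mi

lemma sign_sub_symm (a b : ℝ) : Real.sign (a - b) = - Real.sign (b - a) := by
  rcases lt_trichotomy a b with h|h|h
  · rw [Real.sign_of_neg (by linarith : a - b < 0), Real.sign_of_pos (by linarith : 0 < b - a)]
  · subst h; simp
  · rw [Real.sign_of_pos (by linarith : 0 < a - b), Real.sign_of_neg (by linarith : b - a < 0)]
    ring

lemma sign_negate (x : ℝ) : Real.sign (-x) = - Real.sign x := by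
  rcases lt_trichotomy x 0 with h|h|h
  · rw [Real.sign_of_neg h, Real.sign_of_pos (by linarith : 0 < -x)]; ring
  · simp [h]
  · rw [Real.sign_of_pos h, Real.sign_of_neg (by linarith : -x < 0)]

noncomputable def dvg : (Fin n → Fin n → ℝ) →ₗ[ℝ] (Fin n → ℝ) :=
  { toFun := fun z i => ∑ j ∈ G.neighborFinset i, z i j,
    map_add' := fun a b => by funext i; exact Finset.sum_add_distrib,
    map_smul' := fun c a => by funext i; simp [Finset.mul_sum] }

lemma dvg_apply (z : Fin n → Fin n → ℝ) (i : Fin n) :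
    dvg G z i = ∑ j ∈ G.neighborFinset i, z i j := rfl

set_option maxHeartbeats 1000000 in
lemma feas (S : Finset (Fin n)) (μ : ℝ) (hμ : 0 ≤ μ)
    (hMI : ∀ c : Fin n → ℝ,
      2*μ*(∑ i ∈ S, (G.degree i : ℝ) * c i) - 2*μ*(∑ i ∈ Sᶜ, (G.degree i : ℝ) * |c i|)
        ≤ ∑ i, ∑ j ∈ G.neighborFinset i, kp S c i j) :
    ∃ z : Fin n → Fin n → ℝ,
      (∀ i j, z j i = - z i j) ∧
      (∀ i j, z i j ∈ Set.Icc (-1:ℝ) 1) ∧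
      (∀ i j, G.Adj i j → i ∈ S → j ∉ S → z i j = 1) ∧
      (∀ i, i ∈ S → ∑ j ∈ G.neighborFinset i, z i j = μ * (G.degree i : ℝ)) ∧
      (∀ i, i ∉ S → |∑ j ∈ G.neighborFinset i, z i j| ≤ μ * (G.degree i : ℝ)) := by
  classical
  set Z : Set (Fin n → Fin n → ℝ) :=
    {z | (∀ i j, z j i = - z i j) ∧ (∀ i j, z i j ∈ Set.Icc (-1:ℝ) 1) ∧
      (∀ i j, ¬ G.Adj i j → z i j = 0) ∧
      (∀ i j, G.Adj i j → i ∈ S → j ∉ S → z i j = 1)} with hZ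
  set Bbox : Set (Fin n → ℝ) := Set.univ.pi (fun i =>
    if i ∈ S then {μ * (G.degree i : ℝ)}
    else Set.Icc (-(μ * (G.degree i : ℝ))) (μ * (G.degree i : ℝ))) with hBbox
  have hZconv : Convex ℝ Z := by
    intro z1 h1 z2 h2 a b ha hb hab
    obtain ⟨h1a, h1b, h1c, h1d⟩ := h1
    obtain ⟨h2a, h2b, h2c, h2d⟩ := h2
    refine ⟨?_, ?_, ?_, ?_⟩
    · intro i j
      simp only [Pi.add_apply, Pi.smul_apply, smul_eq_mul]
      rw [h1a i j, h2a i j]; ring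
    · intro i j
      simp only [Pi.add_apply, Pi.smul_apply, smul_eq_mul]
      obtain ⟨l1, r1⟩ := h1b i j
      obtain ⟨l2, r2⟩ := h2b i j
      constructor <;> nlinarith
    · intro i j hna
      simp only [Pi.add_apply, Pi.smul_apply, smul_eq_mul]
      rw [h1c i j hna, h2c i j hna]; ring
    · intro i j hadj hiS hjS
      simp only [Pi.add_apply, Pi.smul_apply, smul_eq_mul]
      rw [h1d i j hadj hiS hjS, h2d i j hadj hiS hjS]; linarith
  have hZclosed : IsClosed Z := by
    have hcont : ∀ i j : Fin n, Continuous fun z : Fin n → Fin n → ℝ => z i j :=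
      fun i j => (continuous_apply j).comp (continuous_apply i)
    have hZeq : Z = (⋂ i, ⋂ j, {z : Fin n → Fin n → ℝ | z j i = - z i j})
        ∩ ((⋂ i, ⋂ j, {z : Fin n → Fin n → ℝ | z i j ∈ Set.Icc (-1:ℝ) 1})
        ∩ ((⋂ i, ⋂ j, {z : Fin n → Fin n → ℝ | ¬ G.Adj i j → z i j = 0})
        ∩ (⋂ i, ⋂ j, {z : Fin n → Fin n → ℝ | G.Adj i j → i ∈ S → j ∉ S → z i j = 1}))) := by
      ext z
      simp only [hZ, Set.mem_setOf_eq, Set.mem_inter_iff, Set.mem_iInter]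
      try tauto
    rw [hZeq]
    refine IsClosed.inter ?_ (IsClosed.inter ?_ (IsClosed.inter ?_ ?_))
    · exact isClosed_iInter fun i => isClosed_iInter fun j =>
        isClosed_eq (hcont j i) ((hcont i j).neg)
    · exact isClosed_iInter fun i => isClosed_iInter fun j =>
        IsClosed.preimage (hcont i j) isClosed_Icc
    · refine isClosed_iInter fun i => isClosed_iInter fun j => ?_
      by_cases hadj : G.Adj i j
      · have : {z : Fin n → Fin n → ℝ | ¬ G.Adj i j → z i j = 0} = Set.univ := by
          ext z; simp [hadj]
        rw [this]; exact isClosed_univ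
      · have : {z : Fin n → Fin n → ℝ | ¬ G.Adj i j → z i j = 0}
            = {z : Fin n → Fin n → ℝ | z i j = 0} := by
          ext z; simp [hadj]
        rw [this]; exact isClosed_eq (hcont i j) continuous_const
    · refine isClosed_iInter fun i => isClosed_iInter fun j => ?_
      by_cases hc : G.Adj i j ∧ i ∈ S ∧ j ∉ S
      · have : {z : Fin n → Fin n → ℝ | G.Adj i j → i ∈ S → j ∉ S → z i j = 1}
            = {z : Fin n → Fin n → ℝ | z i j = 1} := by
          ext z; simp [hc.1, hc.2.1, hc.2.2]
        rw [this]; exact isClosed_eq (hcont i j) continuous_const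
      · have : {z : Fin n → Fin n → ℝ | G.Adj i j → i ∈ S → j ∉ S → z i j = 1}
            = Set.univ := by
          ext z
          simp only [Set.mem_setOf_eq, Set.mem_univ, iff_true]
          intro h1 h2 h3
          exact absurd ⟨h1, h2, h3⟩ hc
        rw [this]; exact isClosed_univ
  have hZcomp : IsCompact Z := by
    have hcomp : IsCompact (Set.univ.pi fun _ : Fin n =>
        Set.univ.pi fun _ : Fin n => Set.Icc (-1:ℝ) 1) :=
      isCompact_univ_pi fun i => isCompact_univ_pi fun j => isCompact_Icc
    refine hcomp.of_isClosed_subset hZclosed ?_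
    intro z hz
    intro i _
    intro j _
    exact hz.2.1 i j
  have hKconv : Convex ℝ (dvg G '' Z) := hZconv.linear_image (dvg G)
  have hKcomp : IsCompact (dvg G '' Z) := hZcomp.image (dvg G).continuous_of_finiteDimensional
  have hBconv : Convex ℝ Bbox := by
    refine convex_pi fun i _ => ?_
    by_cases hiS : i ∈ S <;> simp only [hiS, if_true, if_false]
    · exact convex_singleton _
    · exact convex_Icc _ _
  have hBclosed : IsClosed Bbox := by
    refine isClosed_set_pi fun i _ => ?_
    by_cases hiS : i ∈ S <;> simp only [hiS, if_true, if_false]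
    · exact isClosed_singleton
    · exact isClosed_Icc
  have hmain : ¬ Disjoint (dvg G '' Z) Bbox := by
    intro hdisj
    obtain ⟨f, u, v, hfK, huv, hfB⟩ :=
      geometric_hahn_banach_compact_closed hKconv hKcomp hBconv hBclosed hdisj
    set c : Fin n → ℝ := fun i => f (fun j => if i = j then (1:ℝ) else 0) with hc
    have hf : ∀ x : Fin n → ℝ, f x = ∑ i, x i * c i := by
      intro x
      conv_lhs => rw [pi_eq_sum_univ x]
      rw [map_sum]
      exact Finset.sum_congr rfl fun i _ => by rw [map_smul]; simp [hc]
    -- the maximizing z*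
    set zs : Fin n → Fin n → ℝ := fun i j =>
      if ¬ G.Adj i j then 0
      else if i ∈ S ∧ j ∉ S then 1
      else if j ∈ S ∧ i ∉ S then -1
      else Real.sign (c i - c j) with hzs
    have hzsanti : ∀ i j, zs j i = - zs i j := by
      intro i j
      by_cases hadj : G.Adj i j
      · have hadj' : G.Adj j i := hadj.symm
        simp only [hzs, if_neg (not_not_intro hadj), if_neg (not_not_intro hadj')]
        split_ifs <;>
          first
            | (exfalso; tauto)
            | (exact sign_sub_symm (c j) (c i))
            | norm_num
      · have hadj' : ¬ G.Adj j i := fun h => hadj h.symm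
        simp [hzs, hadj, hadj']
    have hzsZ : zs ∈ Z := by
      refine ⟨hzsanti, ?_, ?_, ?_⟩
      · intro i j
        simp only [hzs]
        split
        · norm_num
        split
        · norm_num
        split
        · norm_num
        · rw [Set.mem_Icc, ← abs_le]
          exact abs_sign_le _
      · intro i j hna
        simp [hzs, hna]
      · intro i j hadj hiS hjS
        simp [hzs, hadj, hiS, hjS]
    have hws : (fun i => if i ∈ S then μ * (G.degree i : ℝ)
        else -(μ * (G.degree i : ℝ)) * Real.sign (c i)) ∈ Bbox := by
      intro i _
      by_cases hiS : i ∈ S <;> simp only [hiS, if_true, if_false]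
      · exact rfl
      · rw [Set.mem_Icc]
        have hs := abs_le.1 (abs_sign_le (c i))
        have hmd : 0 ≤ μ * (G.degree i : ℝ) := mul_nonneg hμ (by positivity)
        constructor <;> nlinarith [hs.1, hs.2]
    set ws : Fin n → ℝ := fun i => if i ∈ S then μ * (G.degree i : ℝ)
        else -(μ * (G.degree i : ℝ)) * Real.sign (c i) with hwsdef
    have hlt : f (dvg G zs) < f ws := by
      have h1 := hfK (dvg G zs) ⟨zs, hzsZ, rfl⟩
      have h2 := hfB ws hws
      linarith
    -- compute f (dvg G zs)
    have hfdvg : 2 * f (dvg G zs) = ∑ i, ∑ j ∈ G.neighborFinset i, kp S c i j := by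
      have h1 : f (dvg G zs) = ∑ i, ∑ j ∈ G.neighborFinset i, zs i j * c i := by
        rw [hf]
        refine Finset.sum_congr rfl fun i _ => ?_
        rw [dvg_apply, Finset.sum_mul]
      have h2 : (∑ i, ∑ j ∈ G.neighborFinset i, zs i j * c i)
          = ∑ i, ∑ j ∈ G.neighborFinset i, (- (zs i j * c j)) := by
        rw [nsum_swap G (fun i j => zs i j * c i)]
        refine Finset.sum_congr rfl fun i _ => Finset.sum_congr rfl fun j _ => ?_
        rw [hzsanti i j]; ring
      have h3 : ∀ i, ∀ j ∈ G.neighborFinset i, (c i - c j) * zs i j = kp S c i j := by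
        intro i j hj
        have hadj : G.Adj i j := by
          rwa [SimpleGraph.mem_neighborFinset] at hj
        simp only [hzs, kp, if_neg (not_not_intro hadj)]
        split_ifs <;>
          first
            | (exfalso; tauto)
            | (exact sign_mul_self _)
            | ring
      calc 2 * f (dvg G zs)
          = (∑ i, ∑ j ∈ G.neighborFinset i, zs i j * c i)
            + ∑ i, ∑ j ∈ G.neighborFinset i, zs i j * c i := by rw [h1]; ring
        _ = (∑ i, ∑ j ∈ G.neighborFinset i, zs i j * c i)
            + ∑ i, ∑ j ∈ G.neighborFinset i, (- (zs i j * c j)) := by rw [← h2]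
        _ = ∑ i, ∑ j ∈ G.neighborFinset i, (c i - c j) * zs i j := by
            rw [← Finset.sum_add_distrib]
            refine Finset.sum_congr rfl fun i _ => ?_
            rw [← Finset.sum_add_distrib]
            refine Finset.sum_congr rfl fun j _ => ?_
            ring
        _ = ∑ i, ∑ j ∈ G.neighborFinset i, kp S c i j := by
            exact Finset.sum_congr rfl fun i _ => Finset.sum_congr rfl (h3 i)
    have hfws : f ws = μ * (∑ i ∈ S, (G.degree i : ℝ) * c i)
        - μ * (∑ i ∈ Sᶜ, (G.degree i : ℝ) * |c i|) := by
      rw [hf, sum_split univ S]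
      simp only [Finset.univ_inter]
      have hS1 : ∑ i ∈ S, ws i * c i = μ * ∑ i ∈ S, (G.degree i : ℝ) * c i := by
        rw [Finset.mul_sum]
        refine Finset.sum_congr rfl fun i hi => ?_
        simp only [hwsdef, hi, if_true]
        ring
      have hS2 : ∑ i ∈ Sᶜ, ws i * c i = - (μ * ∑ i ∈ Sᶜ, (G.degree i : ℝ) * |c i|) := by
        rw [Finset.mul_sum, ← Finset.sum_neg_distrib]
        refine Finset.sum_congr rfl fun i hi => ?_
        have hiS : i ∉ S := Finset.mem_compl.1 hi
        simp only [hwsdef, hiS, if_false]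
        rw [show -(μ * (G.degree i : ℝ)) * Real.sign (c i) * c i
            = -(μ * ((G.degree i : ℝ) * (c i * Real.sign (c i)))) by ring, sign_mul_self]
        try ring
      rw [hS1, hS2]
      ring
    have hmi := hMI c
    rw [← hfdvg] at hmi
    rw [hfws] at hlt
    linarith
  obtain ⟨w, hwK, hwB⟩ := Set.not_disjoint_iff.1 hmain
  obtain ⟨z, hzZ, hdivz⟩ := hwK
  obtain ⟨hza, hzb, hzc, hzd⟩ := hzZ
  refine ⟨z, hza, hzb, hzd, ?_, ?_⟩
  · intro i hiS
    have hw := hwB i (Set.mem_univ i)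
    simp only [hiS, if_true] at hw
    have : w i = μ * (G.degree i : ℝ) := hw
    rw [← this, ← hdivz]
    rfl
  · intro i hiS
    have hw := hwB i (Set.mem_univ i)
    simp only [hiS, if_false] at hw
    rw [Set.mem_Icc] at hw
    have hdi : (∑ j ∈ G.neighborFinset i, z i j) = w i := by
      rw [← dvg_apply G z i, hdivz]
    rw [hdi, abs_le]
    exact ⟨by linarith [hw.1], hw.2⟩

lemma sum_tri (f g : Fin n → ℝ) :
    ∑ i, g i = (∑ i ∈ univ.filter (fun i => 0 < f i), g i)
      + (∑ i ∈ univ.filter (fun i => f i < 0), g i)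
      + (∑ i ∈ univ.filter (fun i => f i = 0), g i) := by
  classical
  rw [← Finset.sum_filter_add_sum_filter_not univ (fun i => 0 < f i) g]
  have h1 : univ.filter (fun i => ¬ 0 < f i)
      = (univ.filter fun i => f i < 0) ∪ (univ.filter fun i => f i = 0) := by
    ext i
    simp only [Finset.mem_filter, Finset.mem_union, Finset.mem_univ, true_and, not_lt]
    constructor
    · intro h; rcases lt_or_eq_of_le h with h'|h'
      · exact Or.inl h'
      · exact Or.inr h'
    · intro h; rcases h with h|h <;> linarith
  have h2 : Disjoint (univ.filter fun i => f i < 0) (univ.filter fun i => f i = 0) := by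
    rw [Finset.disjoint_left]
    intro a ha hb
    rw [Finset.mem_filter] at ha hb
    linarith [ha.2, hb.2.le, hb.2.ge]
  rw [h1, Finset.sum_union h2]
  ring

lemma eig_energy_eq {μ' : ℝ} {x : Fin n → ℝ} (h : IsEigenpair G μ' x) :
    energy G x = μ' := by
  obtain ⟨hx1, z, hz1, hz2, hz3⟩ := h
  choose s hs hseq using hz3
  have hT1 : (∑ i, ∑ j ∈ G.neighborFinset i, x i * z i j) = μ' := by
    have h1 : ∀ i : Fin n, ∑ j ∈ G.neighborFinset i, x i * z i j
        = μ' * ((G.degree i : ℝ) * |x i|) := by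
      intro i
      rw [← Finset.mul_sum, hseq i, ← sgn_mul (hs i)]
      ring
    rw [Finset.sum_congr rfl fun i _ => h1 i, ← Finset.mul_sum, hx1, mul_one]
  have hTswap : (∑ i, ∑ j ∈ G.neighborFinset i, x i * z i j)
      = ∑ i, ∑ j ∈ G.neighborFinset i, (- (x j * z i j)) := by
    rw [nsum_swap G (fun i j => x i * z i j)]
    refine Finset.sum_congr rfl fun i _ => Finset.sum_congr rfl fun j hj => ?_
    have hadj : G.Adj i j := by rwa [SimpleGraph.mem_neighborFinset] at hj
    rw [hz2 i j hadj]; ring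
  have h2T : 2 * (∑ i, ∑ j ∈ G.neighborFinset i, x i * z i j)
      = ∑ i, ∑ j ∈ G.neighborFinset i, |x i - x j| := by
    have : 2 * (∑ i, ∑ j ∈ G.neighborFinset i, x i * z i j)
        = (∑ i, ∑ j ∈ G.neighborFinset i, x i * z i j)
          + ∑ i, ∑ j ∈ G.neighborFinset i, (- (x j * z i j)) := by
      rw [← hTswap]; ring
    rw [this, ← Finset.sum_add_distrib]
    refine Finset.sum_congr rfl fun i _ => ?_
    rw [← Finset.sum_add_distrib]
    refine Finset.sum_congr rfl fun j hj => ?_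
    have hadj : G.Adj i j := by rwa [SimpleGraph.mem_neighborFinset] at hj
    rw [← sgn_mul (hz1 i j hadj)]
    ring
  rw [energy, ← h2T, hT1]
  ring

lemma eig_mem_pi {μ' : ℝ} {x : Fin n → ℝ} (h : IsEigenpair G μ' x) (hne : μ' ≠ 0) :
    x ∈ piSet G := by
  obtain ⟨hx1, z, hz1, hz2, hz3⟩ := h
  choose s hs hseq using hz3
  refine ⟨hx1, ?_⟩
  have hzero : (∑ i, ∑ j ∈ G.neighborFinset i, z i j) = 0 := by
    have h1 : (∑ i, ∑ j ∈ G.neighborFinset i, z i j)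
        = - ∑ i, ∑ j ∈ G.neighborFinset i, z i j := by
      nth_rewrite 1 [nsum_swap G (fun i j => z i j)]
      rw [← Finset.sum_neg_distrib]
      refine Finset.sum_congr rfl fun i _ => ?_
      rw [← Finset.sum_neg_distrib]
      refine Finset.sum_congr rfl fun j hj => ?_
      have hadj : G.Adj i j := by rwa [SimpleGraph.mem_neighborFinset] at hj
      exact hz2 i j hadj
    linarith
  have hds : (∑ i, (G.degree i : ℝ) * s i) = 0 := by
    have h1 : (∑ i, ∑ j ∈ G.neighborFinset i, z i j) = μ' * ∑ i, (G.degree i : ℝ) * s i := by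
      rw [Finset.mul_sum]
      refine Finset.sum_congr rfl fun i _ => ?_
      rw [hseq i]; ring
    rw [hzero] at h1
    rcases mul_eq_zero.1 h1.symm with h|h
    · exact absurd h hne
    · exact h
  have htri := sum_tri x (fun i => (G.degree i : ℝ) * s i)
  have hplus : (∑ i ∈ univ.filter (fun i => 0 < x i), (G.degree i : ℝ) * s i)
      = deltaPlus G x := by
    rw [deltaPlus]
    refine Finset.sum_congr rfl fun i hi => ?_
    rw [Finset.mem_filter] at hi
    rw [sgn_pos hi.2 (hs i), mul_one]
  have hminus : (∑ i ∈ univ.filter (fun i => x i < 0), (G.degree i : ℝ) * s i)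
      = - deltaMinus G x := by
    rw [deltaMinus, ← Finset.sum_neg_distrib]
    refine Finset.sum_congr rfl fun i hi => ?_
    rw [Finset.mem_filter] at hi
    rw [sgn_neg hi.2 (hs i)]; ring
  have hkey : deltaPlus G x - deltaMinus G x
      = - ∑ i ∈ univ.filter (fun i => x i = 0), (G.degree i : ℝ) * s i := by
    rw [hds, hplus, hminus] at htri
    linarith
  rw [hkey, abs_neg]
  calc |∑ i ∈ univ.filter (fun i => x i = 0), (G.degree i : ℝ) * s i|
      ≤ ∑ i ∈ univ.filter (fun i => x i = 0), |(G.degree i : ℝ) * s i| :=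
        Finset.abs_sum_le_sum_abs _ _
    _ ≤ deltaZero G x := by
        rw [deltaZero]
        refine Finset.sum_le_sum fun i hi => ?_
        rw [abs_mul, abs_of_nonneg (by positivity : (0:ℝ) ≤ (G.degree i : ℝ))]
        have := sgn_abs_le (hs i)
        nlinarith [abs_nonneg (s i), Nat.cast_nonneg (α := ℝ) (G.degree i)]

lemma energy_nonneg (x : Fin n → ℝ) : 0 ≤ energy G x := by
  rw [energy]
  have : 0 ≤ ∑ i, ∑ j ∈ G.neighborFinset i, |x i - x j| :=
    Finset.sum_nonneg fun i _ => Finset.sum_nonneg fun j _ => abs_nonneg _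
  linarith


theorem second_eigenvalue_eq_min_on_piSet' (hconn : G.Connected) (hn : 2 ≤ n) :
    0 < sInf (energy G '' piSet G) ∧
      (∃ x : Fin n → ℝ, IsEigenpair G (sInf (energy G '' piSet G)) x) ∧
      ∀ (μ : ℝ) (x : Fin n → ℝ), IsEigenpair G μ x → μ ≠ 0 →
        sInf (energy G '' piSet G) ≤ μ := by
  classical
  obtain ⟨S, hS, hSc, h2, hmin⟩ := exists_cheeger G hconn hn
  have hvolS : 0 < volR G S := volR_pos G hconn hn hS
  set μ : ℝ := eR G S Sᶜ / volR G S with hμdef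
  have hμnn : 0 ≤ μ := div_nonneg (eR_nonneg G _ _) hvolS.le
  have hμpos : 0 < μ := div_pos (lt_of_lt_of_le zero_lt_one (one_le_eR_cross G hconn hS hSc)) hvolS
  have hcut : eR G S Sᶜ = μ * volR G S := by
    rw [hμdef, div_mul_cancel₀ _ (ne_of_gt hvolS)]
  have hvolScomp : volR G S ≤ volR G Sᶜ := by
    have := volR_add_compl G S; linarith
  have hminT : ∀ T : Finset (Fin n), 2 * volR G T ≤ volR G univ → μ * volR G T ≤ eR G T Tᶜ := by
    intro T hT
    rcases Finset.eq_empty_or_nonempty T with rfl | hTne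
    · have : volR G (∅ : Finset (Fin n)) = 0 := Finset.sum_empty
      rw [this, mul_zero]
      exact eR_nonneg G _ _
    · have hTc : Tᶜ.Nonempty := by
        rw [← Finset.card_pos]
        by_contra h
        push_neg at h
        have hTc0 : Tᶜ = ∅ := Finset.card_eq_zero.1 (Nat.le_zero.1 h)
        have hTuniv : T = univ := by
          have := congrArg compl hTc0
          rwa [compl_compl, Finset.compl_empty] at this
        subst hTuniv
        have hv : 0 < volR G univ := volR_pos G hconn hn ⟨hS.choose, Finset.mem_univ _⟩
        linarith
      have h1 := hmin T hTne hTc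
      have hminv : min (volR G T) (volR G Tᶜ) = volR G T := by
        refine min_eq_left ?_
        have := volR_add_compl G T; linarith
      rw [hminv] at h1
      rw [hμdef, div_mul_eq_mul_div, div_le_iff₀ hvolS]
      linarith
  have hminG : ∀ T : Finset (Fin n), T.Nonempty → Tᶜ.Nonempty →
      μ * min (volR G T) (volR G Tᶜ) ≤ eR G T Tᶜ := by
    intro T hTne hTc
    have h1 := hmin T hTne hTc
    rw [hμdef, div_mul_eq_mul_div, div_le_iff₀ hvolS]
    linarith
  -- the test vector
  set xS : Fin n → ℝ := fun i => if i ∈ S then (volR G S)⁻¹ else 0 with hxSdef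
  have hinvpos : 0 < (volR G S)⁻¹ := inv_pos.2 hvolS
  have hsum1 : ∑ i, (G.degree i : ℝ) * |xS i| = 1 := by
    have hpt : ∀ i, (G.degree i : ℝ) * |xS i|
        = (volR G S)⁻¹ * ((G.degree i : ℝ) * (if i ∈ S then (1:ℝ) else 0)) := by
      intro i
      by_cases hi : i ∈ S <;>
        simp [hxSdef, hi, abs_of_pos hinvpos] <;> ring
    rw [Finset.sum_congr rfl fun i _ => hpt i, ← Finset.mul_sum, lin_ind G univ S,
      Finset.univ_inter, inv_mul_cancel₀ (ne_of_gt hvolS)]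
  have hdeltaP : deltaPlus G xS = volR G S := by
    have hfeq : univ.filter (fun i => 0 < xS i) = S := by
      ext i
      simp only [Finset.mem_filter, Finset.mem_univ, true_and, hxSdef]
      by_cases hi : i ∈ S <;> simp [hi, hinvpos]
    rw [deltaPlus, hfeq]; rfl
  have hdeltaM : deltaMinus G xS = 0 := by
    have hfeq : univ.filter (fun i => xS i < 0) = ∅ := by
      ext i
      simp only [Finset.mem_filter, Finset.mem_univ, true_and, Finset.notMem_empty, iff_false]
      by_cases hi : i ∈ S <;> simp [hxSdef, hi] <;> linarith
    rw [deltaMinus, hfeq, Finset.sum_empty]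
  have hdeltaZ : deltaZero G xS = volR G Sᶜ := by
    have hfeq : univ.filter (fun i => xS i = 0) = Sᶜ := by
      ext i
      simp only [Finset.mem_filter, Finset.mem_univ, true_and, Finset.mem_compl, hxSdef]
      by_cases hi : i ∈ S <;> simp [hi, ne_of_gt hinvpos]
    rw [deltaZero, hfeq]; rfl
  have hxSpi : xS ∈ piSet G := by
    refine ⟨hsum1, ?_⟩
    rw [hdeltaP, hdeltaM, hdeltaZ, sub_zero, abs_of_nonneg (volR_nonneg G S)]
    exact hvolScomp
  have henergyxS : energy G xS = μ := by
    have hpt : ∀ i j, |xS i - xS j| = (volR G S)⁻¹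
        * |(if i ∈ S then (1:ℝ) else 0) - (if j ∈ S then (1:ℝ) else 0)| := by
      intro i j
      by_cases hi : i ∈ S <;> by_cases hj : j ∈ S <;>
        simp [hxSdef, hi, hj, abs_of_pos hinvpos]
    rw [energy, Finset.sum_congr rfl fun i _ => Finset.sum_congr rfl fun j _ => hpt i j]
    have : ∀ i : Fin n, ∑ j ∈ G.neighborFinset i, (volR G S)⁻¹
        * |(if i ∈ S then (1:ℝ) else 0) - (if j ∈ S then (1:ℝ) else 0)|
        = (volR G S)⁻¹ * ∑ j ∈ G.neighborFinset i,
          |(if i ∈ S then (1:ℝ) else 0) - (if j ∈ S then (1:ℝ) else 0)| := by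
      intro i; rw [Finset.mul_sum]
    rw [Finset.sum_congr rfl fun i _ => this i, ← Finset.mul_sum]
    have := energy_ind G S
    rw [energy] at this
    rw [hμdef]
    rw [show (1:ℝ)/2 * ((volR G S)⁻¹ * ∑ i, ∑ j ∈ G.neighborFinset i,
      |(if i ∈ S then (1:ℝ) else 0) - (if j ∈ S then (1:ℝ) else 0)|)
      = (volR G S)⁻¹ * ((1:ℝ)/2 * ∑ i, ∑ j ∈ G.neighborFinset i,
      |(if i ∈ S then (1:ℝ) else 0) - (if j ∈ S then (1:ℝ) else 0)|) by ring, this]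
    rw [div_eq_inv_mul]
  -- lower bound on piSet
  have hlow : ∀ x ∈ piSet G, μ ≤ energy G x := by
    intro x hx
    obtain ⟨hx1, hx2⟩ := hx
    set xp : Fin n → ℝ := fun i => max (x i) 0 with hxp
    set xm : Fin n → ℝ := fun i => max (-(x i)) 0 with hxm
    have hxpnn : ∀ i, 0 ≤ xp i := fun i => le_max_right _ _
    have hxmnn : ∀ i, 0 ≤ xm i := fun i => le_max_right _ _
    have htri : volR G univ = deltaPlus G x + deltaMinus G x + deltaZero G x := by
      rw [deltaPlus, deltaMinus, deltaZero, volR]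
      exact sum_tri x (fun i => (G.degree i : ℝ))
    have habs : |deltaPlus G x - deltaMinus G x| ≤ deltaZero G x := hx2
    have hdp : 2 * deltaPlus G x ≤ volR G univ := by
      rcases abs_le.1 habs with ⟨hl, hr⟩
      linarith
    have hdm : 2 * deltaMinus G x ≤ volR G univ := by
      rcases abs_le.1 habs with ⟨hl, hr⟩
      linarith
    have hsuppP : univ.filter (fun i => xp i ≠ 0) = univ.filter (fun i => 0 < x i) := by
      ext i
      simp only [Finset.mem_filter, Finset.mem_univ, true_and, hxp]
      constructor
      · intro h
        rcases le_or_gt (x i) 0 with h'|h'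
        · exact absurd (max_eq_right h') h
        · exact h'
      · intro h
        rw [max_eq_left h.le]
        exact ne_of_gt h
    have hsuppM : univ.filter (fun i => xm i ≠ 0) = univ.filter (fun i => x i < 0) := by
      ext i
      simp only [Finset.mem_filter, Finset.mem_univ, true_and, hxm]
      constructor
      · intro h
        rcases le_or_gt 0 (x i) with h'|h'
        · exact absurd (max_eq_right (by linarith : -(x i) ≤ 0)) h
        · exact h'
      · intro h
        rw [max_eq_left (by linarith : (0:ℝ) ≤ -(x i))]
        intro hc
        linarith [hc ▸ (by linarith : (0:ℝ) < -(x i))]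
    have hvolP : volR G (univ.filter fun i => xp i ≠ 0) = deltaPlus G x := by
      rw [hsuppP]; rfl
    have hvolM : volR G (univ.filter fun i => xm i ≠ 0) = deltaMinus G x := by
      rw [hsuppM]; rfl
    have hcoP := coarea G μ hminT xp hxpnn (by rw [hvolP]; linarith)
    have hcoM := coarea G μ hminT xm hxmnn (by rw [hvolM]; linarith)
    have hEsplit : energy G x = energy G xp + energy G xm := by
      have hpt : ∀ i j : Fin n, |x i - x j| = |xp i - xp j| + |xm i - xm j| := by
        intro i j
        simp only [hxp, hxm]
        exact abs_split (x i) (x j)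
      rw [energy, energy, energy,
        Finset.sum_congr rfl fun i (_ : i ∈ univ) => Finset.sum_congr rfl
          fun j (_ : j ∈ G.neighborFinset i) => hpt i j]
      simp only [Finset.sum_add_distrib]
      ring
    have hsplit2 : ∑ i, (G.degree i : ℝ) * |x i|
        = (∑ i, (G.degree i : ℝ) * xp i) + ∑ i, (G.degree i : ℝ) * xm i := by
      rw [← Finset.sum_add_distrib]
      refine Finset.sum_congr rfl fun i _ => ?_
      rw [abs_eq_pos_add_neg (x i)]
      simp only [hxp, hxm]
      ring
    have e1 : μ * (∑ i, (G.degree i : ℝ) * xp i) + μ * (∑ i, (G.degree i : ℝ) * xm i) = μ := by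
      have : μ * (∑ i, (G.degree i : ℝ) * |x i|) = μ := by rw [hx1, mul_one]
      rw [hsplit2] at this
      linarith [this]
    linarith
  -- identification of the infimum
  have hbdd : BddBelow (energy G '' piSet G) := by
    refine ⟨0, ?_⟩
    rintro r ⟨y, hy, rfl⟩
    exact energy_nonneg G y
  have hmem : μ ∈ energy G '' piSet G := ⟨xS, hxSpi, henergyxS⟩
  have hinfle : sInf (energy G '' piSet G) ≤ μ := csInf_le hbdd hmem
  have hlein : μ ≤ sInf (energy G '' piSet G) := by
    refine le_csInf ⟨μ, hmem⟩ ?_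
    rintro b ⟨y, hy, rfl⟩
    exact hlow y hy
  have hm : sInf (energy G '' piSet G) = μ := le_antisymm hinfle hlein
  rw [hm]
  refine ⟨hμpos, ?_, ?_⟩
  · -- existence of eigenpair at μ
    have hC1 := claimC1 G S μ hμnn hcut h2 hS hminG
    have hP := phiP_ind G S μ hμnn h2 hminT hC1
    have hM := phiM_ind G S μ hμnn hcut h2 hminT
    have hMIc := MI G S μ hP hM
    obtain ⟨z, hza, hzb, hzf, hdS, hdSc⟩ := feas G S μ hμnn hMIc
    refine ⟨xS, hsum1, z, ?_, ?_, ?_⟩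
    · intro i j hadj
      by_cases hi : i ∈ S <;> by_cases hj : j ∈ S
      · have hdiff : xS i - xS j = 0 := by simp [hxSdef, hi, hj]
        rw [hdiff]
        exact mem_sgn_zero (abs_le.2 (Set.mem_Icc.1 (hzb i j)))
      · have hdiff : xS i - xS j = (volR G S)⁻¹ := by simp [hxSdef, hi, hj]
        rw [hdiff]
        exact mem_sgn_pos hinvpos (hzf i j hadj hi hj)
      · have hdiff : xS i - xS j = -(volR G S)⁻¹ := by simp [hxSdef, hi, hj]
        rw [hdiff]
        have h1 : z j i = 1 := hzf j i hadj.symm hj hi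
        have h2' : z i j = -1 := by
          have := hza i j
          rw [h1] at this
          linarith
        exact mem_sgn_neg (by linarith : -(volR G S)⁻¹ < 0) h2'
      · have hdiff : xS i - xS j = 0 := by simp [hxSdef, hi, hj]
        rw [hdiff]
        exact mem_sgn_zero (abs_le.2 (Set.mem_Icc.1 (hzb i j)))
    · intro i j _
      exact hza i j
    · intro i
      by_cases hi : i ∈ S
      · refine ⟨1, ?_, ?_⟩
        · have hx : xS i = (volR G S)⁻¹ := by simp [hxSdef, hi]
          rw [hx]
          exact mem_sgn_pos hinvpos rfl
        · rw [hdS i hi]; ring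
      · have hdpos : 0 < μ * (G.degree i : ℝ) := by
          have := degree_pos G hconn hn i
          have h0 : (0:ℝ) < (G.degree i : ℝ) := by exact_mod_cast this
          exact mul_pos hμpos h0
        refine ⟨(∑ j ∈ G.neighborFinset i, z i j) / (μ * (G.degree i : ℝ)), ?_, ?_⟩
        · have hx : xS i = 0 := by simp [hxSdef, hi]
          rw [hx]
          refine mem_sgn_zero ?_
          rw [abs_div, abs_of_pos hdpos, div_le_one hdpos]
          exact hdSc i hi
        · rw [eq_comm]
          field_simp
          rw [mul_div_cancel_left₀ _ (ne_of_gt (by exact_mod_cast degree_pos G hconn hn i : (0:ℝ) < G.degree i))]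
  · -- minimality over nonzero eigenvalues
    intro μ' x hx hne
    have h1 := eig_energy_eq G hx
    have h2' := eig_mem_pi G hx hne
    rw [← h1]
    exact hlow x h2'


end OneLap

/-- Theorem 5.12: for connected `G` with `n ≥ 2`, the number
`m = min_{x ∈ π} I(x)` is positive, is an eigenvalue of `Δ₁(G)`, and every nonzero
eigenvalue is `≥ m`; i.e. `m` is the second eigenvalue `μ₂`. -/
theorem second_eigenvalue_eq_min_on_piSet {n : ℕ} (G : SimpleGraph (Fin n))
    [DecidableRel G.Adj] (hconn : G.Connected) (hn : 2 ≤ n) :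
    0 < sInf (energy G '' piSet G) ∧
      (∃ x : Fin n → ℝ, IsEigenpair G (sInf (energy G '' piSet G)) x) ∧
      ∀ (μ : ℝ) (x : Fin n → ℝ), IsEigenpair G μ x → μ ≠ 0 →
        sInf (energy G '' piSet G) ≤ μ :=
  OneLap.second_eigenvalue_eq_min_on_piSet' G hconn hn
end

section
/- Let G be connected with n ≥ 2 vertices, and suppose there are two disjoint groups of distinct vertices {α_1,…,α_k} and {β_1,…,β_l} such that ∑_{i=1}^k d_{α_i} = ∑_{j=1}^l d_{β_j} = c and in at least one of the two groups some two vertices are adjacent. Then the second eigenvalue μ₂ = min_{x∈π} I(x) of Δ₁(G) satisfies 0 < μ₂ ≤ 1 − 1/(2c). -/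
open Finset

section Aux
variable {n : ℕ} (G : SimpleGraph (Fin n)) [DecidableRel G.Adj]

lemma sum_nbr_eq_two_mul_edges (f : Fin n → Fin n → ℝ) (hf : ∀ i j, f i j = f j i) :
    ∑ i, ∑ j ∈ G.neighborFinset i, f i j
      = 2 * ∑ e ∈ G.edgeFinset, Sym2.lift ⟨f, hf⟩ e := by
  have h1 : ∑ d : G.Dart, f d.fst d.snd = ∑ i, ∑ j ∈ G.neighborFinset i, f i j := by
    rw [← Finset.sum_fiberwise_of_maps_to (g := fun d : G.Dart => d.fst) (t := univ)
      (fun d _ => mem_univ _)]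
    refine Finset.sum_congr rfl fun v _ => ?_
    rw [show (univ.filter fun d : G.Dart => d.fst = v) = univ.image (G.dartOfNeighborSet v) from
      G.dart_fst_fiber v]
    rw [Finset.sum_image (fun a _ b _ h => G.dartOfNeighborSet_injective v h)]
    simp only [SimpleGraph.dartOfNeighborSet]
    rw [SimpleGraph.neighborFinset_def, ← Finset.sum_set_coe]
  have h2 : ∑ d : G.Dart, f d.fst d.snd = 2 * ∑ e ∈ G.edgeFinset, Sym2.lift ⟨f, hf⟩ e := by
    have : ∀ d : G.Dart, f d.fst d.snd = Sym2.lift ⟨f, hf⟩ d.edge := by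
      rintro ⟨⟨a, b⟩, h⟩; simp [SimpleGraph.Dart.edge]
    simp_rw [this]
    rw [← Finset.sum_fiberwise_of_maps_to (g := SimpleGraph.Dart.edge) (t := G.edgeFinset)
      (fun d _ => by rw [SimpleGraph.mem_edgeFinset]; exact d.edge_mem)]
    rw [Finset.mul_sum]
    refine Finset.sum_congr rfl fun e he => ?_
    rw [Finset.sum_congr rfl (fun d hd => by rw [(Finset.mem_filter.1 hd).2]),
      Finset.sum_const, G.dart_edge_fiber_card e (SimpleGraph.mem_edgeFinset.1 he)]
    simp [mul_comm]
  rw [← h1, h2]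

lemma sum_nbr_swap (g : Fin n → ℝ) :
    ∑ i, ∑ j ∈ G.neighborFinset i, g j = ∑ j, (G.degree j : ℝ) * g j := by
  have h : ∀ i, ∑ j ∈ G.neighborFinset i, g j = ∑ j, if G.Adj i j then g j else 0 := by
    intro i
    rw [SimpleGraph.neighborFinset_eq_filter, Finset.sum_filter]
  simp_rw [h]
  rw [Finset.sum_comm]
  refine Finset.sum_congr rfl fun j _ => ?_
  rw [← Finset.sum_filter]
  have : (univ.filter fun i => G.Adj i j) = G.neighborFinset j := by
    rw [SimpleGraph.neighborFinset_eq_filter]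
    exact Finset.filter_congr fun i _ => by rw [SimpleGraph.adj_comm]
  rw [this, Finset.sum_const, SimpleGraph.card_neighborFinset_eq_degree, nsmul_eq_mul]

variable {G}

/-- The symmetric edge weight function. -/
noncomputable def eF (x : Fin n → ℝ) : Sym2 (Fin n) → ℝ :=
  Sym2.lift ⟨fun a b => |x a - x b|, fun a b => abs_sub_comm _ _⟩

lemma energy_eq_sum_edges (x : Fin n → ℝ) :
    energy G x = ∑ e ∈ G.edgeFinset, eF x e := by
  unfold energy eF
  rw [sum_nbr_eq_two_mul_edges G (fun i j => |x i - x j|) (fun i j => abs_sub_comm _ _)]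
  ring

lemma walk_sum_bound (x : Fin n → ℝ) {a b : Fin n} (p : G.Walk a b) :
    x a - x b ≤ (p.edges.map (eF x)).sum := by
  induction p with
  | nil => simp
  | cons h q ih =>
    rename_i u v w
    rw [SimpleGraph.Walk.edges_cons, List.map_cons, List.sum_cons]
    have h1 : eF x s(u, v) = |x u - x v| := by simp [eF]
    have : x u - x w = (x u - x v) + (x v - x w) := by ring
    rw [this, h1]
    exact add_le_add (le_abs_self _) ih

lemma sub_le_energy (hconn : G.Connected) (x : Fin n → ℝ) (i j : Fin n) :
    x i - x j ≤ energy G x := by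
  obtain ⟨w⟩ := hconn.preconnected i j
  let p := w.toPath
  have hb := walk_sum_bound x (p : G.Walk i j)
  rw [← List.sum_toFinset _ p.2.isTrail.edges_nodup] at hb
  refine hb.trans ?_
  rw [energy_eq_sum_edges]
  refine Finset.sum_le_sum_of_subset_of_nonneg ?_ (fun e _ _ => ?_)
  · intro e he
    rw [List.mem_toFinset] at he
    exact SimpleGraph.mem_edgeFinset.2 ((p : G.Walk i j).edges_subset_edgeSet he)
  · induction e with
    | _ a b => simp [eF, abs_nonneg]
end Aux

/-- Theorem 5.13: for connected `G` with `n ≥ 2`, if two disjoint groups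
of vertices have equal degree sums `c` and one of them contains a pair of adjacent vertices,
then the second eigenvalue `μ₂ = min_{x ∈ π} I(x)` satisfies `0 < μ₂ ≤ 1 − 1/(2c)`. -/
theorem second_eigenvalue_upper_bound {n : ℕ} (G : SimpleGraph (Fin n)) [DecidableRel G.Adj]
    (hconn : G.Connected) (hn : 2 ≤ n)
    (A B : Finset (Fin n)) (hAB : Disjoint A B) (c : ℝ)
    (hcA : ∑ i ∈ A, (G.degree i : ℝ) = c) (hcB : ∑ j ∈ B, (G.degree j : ℝ) = c)
    (hadj : (∃ u ∈ A, ∃ v ∈ A, G.Adj u v) ∨ (∃ u ∈ B, ∃ v ∈ B, G.Adj u v)) :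
    0 < sInf (energy G '' piSet G) ∧ sInf (energy G '' piSet G) ≤ 1 - 1 / (2 * c) := by
  haveI : NeZero n := ⟨by omega⟩
  -- degrees are positive
  have hdeg : ∀ v : Fin n, 0 < G.degree v := by
    intro v
    rw [G.degree_pos_iff_exists_adj v]
    haveI : Nontrivial (Fin n) := Fin.nontrivial_iff_two_le.mpr hn
    obtain ⟨w, hw⟩ := exists_ne v
    obtain ⟨p⟩ := hconn.preconnected v w
    cases p with
    | nil => exact absurd rfl hw
    | cons h q => exact ⟨_, h⟩
  have hdegR : ∀ v : Fin n, (0:ℝ) < (G.degree v : ℝ) := fun v => by exact_mod_cast hdeg v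
  set d : ℝ := ∑ i, (G.degree i : ℝ) with hd_def
  have hd : 0 < d := Finset.sum_pos (fun i _ => hdegR i) Finset.univ_nonempty
  -- c > 0
  have hc : 0 < c := by
    rcases hadj with ⟨u, hu, _, _, _⟩ | ⟨u, hu, _, _, _⟩
    · exact hcA ▸ Finset.sum_pos (fun i _ => hdegR i) ⟨u, hu⟩
    · exact hcB ▸ Finset.sum_pos (fun i _ => hdegR i) ⟨u, hu⟩
  -- the witness
  set x₀ : Fin n → ℝ := fun i => if i ∈ A then 1 / (2 * c) else if i ∈ B then -(1 / (2 * c)) else 0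
    with hx₀
  have hxA : ∀ i ∈ A, x₀ i = 1 / (2 * c) := fun i hi => by simp [hx₀, hi]
  have hxB : ∀ i ∈ B, x₀ i = -(1 / (2 * c)) := fun i hi => by
    simp [hx₀, Finset.disjoint_right.mp hAB hi, hi]
  have hxO : ∀ i, i ∉ A → i ∉ B → x₀ i = 0 := fun i hiA hiB => by simp [hx₀, hiA, hiB]
  have h2c : (0:ℝ) < 1 / (2 * c) := by positivity
  have habs : ∀ i, |x₀ i| = if i ∈ A ∪ B then 1 / (2 * c) else 0 := by
    intro i
    by_cases hiA : i ∈ A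
    · simp [hxA i hiA, abs_of_pos h2c, Finset.mem_union, hiA, hc.le]
    · by_cases hiB : i ∈ B
      · rw [hxB i hiB, abs_neg, abs_of_pos h2c, if_pos (Finset.mem_union.2 (Or.inr hiB))]
      · rw [hxO i hiA hiB, abs_zero, if_neg (by simp [Finset.mem_union, hiA, hiB])]
  -- the normalization
  have hnorm : ∑ i, (G.degree i : ℝ) * |x₀ i| = 1 := by
    simp_rw [habs, mul_ite, mul_zero]
    rw [Finset.sum_ite_mem, Finset.univ_inter, Finset.sum_union hAB]
    rw [← Finset.sum_mul, ← Finset.sum_mul, hcA, hcB]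
    field_simp
    ring
  -- x₀ ∈ piSet
  have hπ : x₀ ∈ piSet G := by
    refine ⟨hnorm, ?_⟩
    have hP : deltaPlus G x₀ = c := by
      rw [deltaPlus, show univ.filter (fun i => 0 < x₀ i) = A from ?_, hcA]
      ext i
      simp only [Finset.mem_filter, Finset.mem_univ, true_and]
      constructor
      · intro hpos
        by_contra hiA
        by_cases hiB : i ∈ B
        · rw [hxB i hiB] at hpos; linarith
        · rw [hxO i hiA hiB] at hpos; linarith
      · intro hi; rw [hxA i hi]; exact h2c
    have hM : deltaMinus G x₀ = c := by
      rw [deltaMinus, show univ.filter (fun i => x₀ i < 0) = B from ?_, hcB]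
      ext i
      simp only [Finset.mem_filter, Finset.mem_univ, true_and]
      constructor
      · intro hneg
        by_contra hiB
        by_cases hiA : i ∈ A
        · rw [hxA i hiA] at hneg; linarith
        · rw [hxO i hiA hiB] at hneg; linarith
      · intro hi; rw [hxB i hi]; linarith
    rw [hP, hM, sub_self, abs_zero, deltaZero]
    exact Finset.sum_nonneg fun i _ => (hdegR i).le
  -- energy bound
  have henergy : energy G x₀ ≤ 1 - 1 / c := by
    obtain ⟨u, v, huv, heq, hau, hav⟩ :
        ∃ u, ∃ v, G.Adj u v ∧ (x₀ u = x₀ v ∧ |x₀ u| = 1/(2*c) ∧ |x₀ v| = 1/(2*c)) := by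
      rcases hadj with ⟨u, hu, v, hv, huv⟩ | ⟨u, hu, v, hv, huv⟩
      · exact ⟨u, v, huv, by rw [hxA u hu, hxA v hv], by
          rw [habs]; simp [Finset.mem_union, hu], by rw [habs]; simp [Finset.mem_union, hv]⟩
      · exact ⟨u, v, huv, by rw [hxB u hu, hxB v hv], by
          rw [habs]; simp [Finset.mem_union, hu], by rw [habs]; simp [Finset.mem_union, hv]⟩
    -- slack terms
    set t : Fin n → Fin n → ℝ := fun i j => (|x₀ i| + |x₀ j|) - |x₀ i - x₀ j| with ht
    have htnn : ∀ i j, 0 ≤ t i j := fun i j => by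
      simp only [ht, sub_nonneg]; exact abs_sub _ _
    have htu : t u v = 1 / c := by
      simp only [ht, heq, sub_self, abs_zero, hav, sub_zero]
      field_simp; norm_num
    have htv : t v u = 1 / c := by
      simp only [ht, heq, sub_self, abs_zero, hav, sub_zero]
      field_simp; norm_num
    have hS : 2 / c ≤ ∑ i, ∑ j ∈ G.neighborFinset i, t i j := by
      have huv' : u ≠ v := G.ne_of_adj huv
      have hinner_nn : ∀ i, 0 ≤ ∑ j ∈ G.neighborFinset i, t i j :=
        fun i => Finset.sum_nonneg fun j _ => htnn i j
      have h1 : t u v ≤ ∑ j ∈ G.neighborFinset u, t u j :=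
        Finset.single_le_sum (fun j _ => htnn u j)
          ((G.mem_neighborFinset u v).2 huv)
      have h2 : t v u ≤ ∑ j ∈ G.neighborFinset v, t v j :=
        Finset.single_le_sum (fun j _ => htnn v j)
          ((G.mem_neighborFinset v u).2 huv.symm)
      have h3 : ∑ i ∈ ({u, v} : Finset (Fin n)), ∑ j ∈ G.neighborFinset i, t i j
          ≤ ∑ i, ∑ j ∈ G.neighborFinset i, t i j :=
        Finset.sum_le_sum_of_subset_of_nonneg (Finset.subset_univ _)
          (fun i _ _ => hinner_nn i)
      rw [Finset.sum_pair huv'] at h3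
      have h4 : 2 / c = t u v + t v u := by rw [htu, htv]; ring
      rw [h4]
      exact le_trans (add_le_add h1 h2) h3
    -- total of |x i| + |x j| over darts is 2
    have htot : ∑ i, ∑ j ∈ G.neighborFinset i, (|x₀ i| + |x₀ j|) = 2 := by
      have e1 : ∀ i, ∑ j ∈ G.neighborFinset i, (|x₀ i| + |x₀ j|)
          = (G.degree i : ℝ) * |x₀ i| + ∑ j ∈ G.neighborFinset i, |x₀ j| := by
        intro i
        rw [Finset.sum_add_distrib, Finset.sum_const,
          SimpleGraph.card_neighborFinset_eq_degree, nsmul_eq_mul]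
      rw [Finset.sum_congr rfl (fun i _ => e1 i), Finset.sum_add_distrib,
        sum_nbr_swap G (fun j => |x₀ j|), hnorm]
      norm_num
    have hsum : ∑ i, ∑ j ∈ G.neighborFinset i, |x₀ i - x₀ j| ≤ 2 - 2 / c := by
      have : ∑ i, ∑ j ∈ G.neighborFinset i, |x₀ i - x₀ j|
          = (∑ i, ∑ j ∈ G.neighborFinset i, (|x₀ i| + |x₀ j|))
            - ∑ i, ∑ j ∈ G.neighborFinset i, t i j := by
        rw [← Finset.sum_sub_distrib]
        refine Finset.sum_congr rfl fun i _ => ?_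
        rw [← Finset.sum_sub_distrib]
        exact Finset.sum_congr rfl fun j _ => by simp [ht]
      rw [this, htot]
      linarith
    rw [energy]
    rw [show (1:ℝ) - 1 / c = (1/2) * (2 - 2/c) by ring]
    have h20 : (0:ℝ) < 1/2 := by norm_num
    exact (mul_le_mul_of_nonneg_left hsum h20.le)
  -- assemble
  have hub : energy G x₀ ≤ 1 - 1 / (2 * c) := by
    have : 1 / (2 * c) ≤ 1 / c := by
      apply one_div_le_one_div_of_le hc
      linarith
    linarith
  -- lower bound on all energies over piSet
  have hlb : ∀ y ∈ energy G '' piSet G, 1 / d ≤ y := by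
    rintro y ⟨x, ⟨hxn, hxδ⟩, rfl⟩
    obtain ⟨i₀, -, hi₀⟩ := Finset.exists_max_image Finset.univ (fun i => |x i|)
      Finset.univ_nonempty
    have hmax : 1 ≤ d * |x i₀| := by
      calc 1 = ∑ i, (G.degree i : ℝ) * |x i| := hxn.symm
        _ ≤ ∑ i, (G.degree i : ℝ) * |x i₀| :=
          Finset.sum_le_sum fun i _ =>
            mul_le_mul_of_nonneg_left (hi₀ i (Finset.mem_univ i)) (hdegR i).le
        _ = d * |x i₀| := by rw [← Finset.sum_mul]
    have hmax' : 1 / d ≤ |x i₀| := by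
      rw [div_le_iff₀ hd] at *
      linarith [hmax, mul_comm d |x i₀|]
    rcases lt_trichotomy (x i₀) 0 with hneg | hzero | hpos
    · -- some coordinate must be ≥ 0
      obtain ⟨j, hj⟩ : ∃ j, 0 ≤ x j := by
        by_contra hall
        push_neg at hall
        have hPz : deltaPlus G x = 0 := by
          rw [deltaPlus, Finset.filter_false_of_mem (fun i _ => by
            simpa using (hall i).le.not_gt), Finset.sum_empty]
        have hZz : deltaZero G x = 0 := by
          rw [deltaZero, Finset.filter_false_of_mem (fun i _ => (hall i).ne), Finset.sum_empty]
        have hMd : deltaMinus G x = d := by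
          rw [deltaMinus, Finset.filter_true_of_mem (fun i _ => hall i)]
        rw [hPz, hMd, hZz, zero_sub, abs_neg, abs_of_pos hd] at hxδ
        linarith
      have := sub_le_energy hconn x j i₀
      have : |x i₀| = -(x i₀) := abs_of_neg hneg
      linarith [sub_le_energy hconn x j i₀]
    · exfalso
      have : ∀ i, x i = 0 := by
        intro i
        have h := hi₀ i (Finset.mem_univ i)
        rw [hzero, abs_zero] at h
        exact abs_eq_zero.mp (le_antisymm h (abs_nonneg _))
      simp [this] at hxn
    · obtain ⟨j, hj⟩ : ∃ j, x j ≤ 0 := by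
        by_contra hall
        push_neg at hall
        have hMz : deltaMinus G x = 0 := by
          rw [deltaMinus, Finset.filter_false_of_mem (fun i _ => (hall i).le.not_gt),
            Finset.sum_empty]
        have hZz : deltaZero G x = 0 := by
          rw [deltaZero, Finset.filter_false_of_mem (fun i _ => (hall i).ne'), Finset.sum_empty]
        have hPd : deltaPlus G x = d := by
          rw [deltaPlus, Finset.filter_true_of_mem (fun i _ => hall i)]
        rw [hPd, hMz, hZz, sub_zero, abs_of_pos hd] at hxδ
        linarith
      have : |x i₀| = x i₀ := abs_of_pos hpos
      linarith [sub_le_energy hconn x i₀ j]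
  have hne : (energy G '' piSet G).Nonempty := ⟨energy G x₀, x₀, hπ, rfl⟩
  have hbdd : BddBelow (energy G '' piSet G) := ⟨1 / d, hlb⟩
  constructor
  · have h1 : 1 / d ≤ sInf (energy G '' piSet G) := le_csInf hne hlb
    have : (0:ℝ) < 1 / d := by positivity
    linarith
  · exact (csInf_le hbdd ⟨x₀, hπ, rfl⟩).trans hub
end

section
/- Let G be connected with n ≥ 2 vertices. Then there exists a vector y ∈ ℝ^n such that h(G) = sup_{c ∈ ℝ} (∑_{{i,j}∈E} |y_i − y_j|) / (∑_{i=1}^n d_i |y_i − c|). -/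
open Finset

lemma sum_adj_pairs {n : ℕ} (G : SimpleGraph (Fin n)) [DecidableRel G.Adj]
    (g : Fin n → Fin n → ℝ) :
    ∑ i, ∑ j ∈ G.neighborFinset i, g i j
      = ∑ p ∈ univ.filter (fun p : Fin n × Fin n => G.Adj p.1 p.2), g p.1 p.2 := by
  rw [Finset.sum_filter, Fintype.sum_prod_type]
  refine Finset.sum_congr rfl fun i _ => ?_
  rw [SimpleGraph.neighborFinset_eq_filter, Finset.sum_filter]

lemma swap_adj_sum {n : ℕ} (G : SimpleGraph (Fin n)) [DecidableRel G.Adj]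
    (g : Fin n → Fin n → ℝ) :
    ∑ p ∈ univ.filter (fun p : Fin n × Fin n => G.Adj p.1 p.2), g p.2 p.1
      = ∑ p ∈ univ.filter (fun p : Fin n × Fin n => G.Adj p.1 p.2), g p.1 p.2 := by
  refine Finset.sum_nbij' (fun p => Prod.swap p) (fun p => Prod.swap p) ?_ ?_ ?_ ?_ ?_
  · intro p hp; simp at hp ⊢; exact hp.symm
  · intro p hp; simp at hp ⊢; exact hp.symm
  · intro p _; simp
  · intro p _; simp
  · intro p _; rfl

/-- Lemma 5.14: for connected `G` with `n ≥ 2`, there is a vector `y` with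
`h(G) = sup_{c ∈ ℝ} (∑_{{i,j}∈E} |y_i − y_j|) / (∑_i d_i |y_i − c|)`. -/
theorem cheeger_eq_sup_quotient {n : ℕ} (G : SimpleGraph (Fin n)) [DecidableRel G.Adj]
    (hconn : G.Connected) (hn : 2 ≤ n) :
    ∃ y : Fin n → ℝ, cheeger G =
      sSup { r : ℝ | ∃ c : ℝ,
        r = energy G y / ∑ i, (G.degree i : ℝ) * |y i - c| } := by
  classical
  have hdeg : ∀ v : Fin n, 0 < G.degree v := by
    intro v
    rw [G.degree_pos_iff_exists_adj]
    have h1 : 1 < Fintype.card (Fin n) := by rw [Fintype.card_fin]; omega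
    obtain ⟨w, hw⟩ := Fintype.exists_ne_of_one_lt_card h1 v
    obtain ⟨p⟩ := hconn.preconnected v w
    cases p with
    | nil => exact absurd rfl hw
    | cons h _ => exact ⟨_, h⟩
  have hvol : ∀ T : Finset (Fin n), T.Nonempty → 0 < ∑ i ∈ T, (G.degree i : ℝ) :=
    fun T hT => Finset.sum_pos (fun i _ => by exact_mod_cast hdeg i) hT
  have hfin : Set.Finite { r : ℝ | ∃ S : Finset (Fin n), S.Nonempty ∧ S ≠ univ ∧
      r = ((univ.filter (fun p : Fin n × Fin n => G.Adj p.1 p.2 ∧ p.1 ∈ S ∧ p.2 ∉ S)).card : ℝ) /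
        min (∑ i ∈ S, (G.degree i : ℝ)) (∑ i ∈ Sᶜ, (G.degree i : ℝ)) } := by
    apply Set.Finite.subset (Set.finite_range (fun S : Finset (Fin n) =>
      ((univ.filter (fun p : Fin n × Fin n => G.Adj p.1 p.2 ∧ p.1 ∈ S ∧ p.2 ∉ S)).card : ℝ) /
        min (∑ i ∈ S, (G.degree i : ℝ)) (∑ i ∈ Sᶜ, (G.degree i : ℝ))))
    rintro r ⟨S, _, _, rfl⟩
    exact ⟨S, rfl⟩
  have hne : Set.Nonempty { r : ℝ | ∃ S : Finset (Fin n), S.Nonempty ∧ S ≠ univ ∧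
      r = ((univ.filter (fun p : Fin n × Fin n => G.Adj p.1 p.2 ∧ p.1 ∈ S ∧ p.2 ∉ S)).card : ℝ) /
        min (∑ i ∈ S, (G.degree i : ℝ)) (∑ i ∈ Sᶜ, (G.degree i : ℝ)) } := by
    refine ⟨_, ⟨{⟨0, by omega⟩}, Finset.singleton_nonempty _, ?_, rfl⟩⟩
    intro h
    have h1 : (⟨1, by omega⟩ : Fin n) ∈ ({⟨0, by omega⟩} : Finset (Fin n)) :=
      h ▸ Finset.mem_univ _
    simp at h1
  have hmem : cheeger G ∈ { r : ℝ | ∃ S : Finset (Fin n), S.Nonempty ∧ S ≠ univ ∧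
      r = ((univ.filter (fun p : Fin n × Fin n => G.Adj p.1 p.2 ∧ p.1 ∈ S ∧ p.2 ∉ S)).card : ℝ) /
        min (∑ i ∈ S, (G.degree i : ℝ)) (∑ i ∈ Sᶜ, (G.degree i : ℝ)) } := by
    rw [cheeger]
    exact hne.csInf_mem hfin
  obtain ⟨S, hSne, hSuniv, hval⟩ := hmem
  set a : ℝ := ∑ i ∈ S, (G.degree i : ℝ) with ha_def
  set b : ℝ := ∑ i ∈ Sᶜ, (G.degree i : ℝ) with hb_def
  set E : ℝ := ((univ.filter (fun p : Fin n × Fin n =>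
    G.Adj p.1 p.2 ∧ p.1 ∈ S ∧ p.2 ∉ S)).card : ℝ) with hE_def
  have ha : 0 < a := hvol S hSne
  have hb : 0 < b := hvol Sᶜ (Finset.nonempty_iff_ne_empty.mpr
    (fun h => hSuniv ((Finset.compl_eq_empty_iff S).mp h)))
  have hm : 0 < min a b := lt_min ha hb
  have hEnn : 0 ≤ E := Nat.cast_nonneg _
  set y : Fin n → ℝ := fun i => if i ∈ S then (1 : ℝ) else 0 with hy_def
  -- energy computation
  have hE : energy G y = E := by
    rw [energy, sum_adj_pairs]
    have hsplit : ∀ p ∈ univ.filter (fun p : Fin n × Fin n => G.Adj p.1 p.2),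
        |y p.1 - y p.2| = (if p.1 ∈ S ∧ p.2 ∉ S then (1:ℝ) else 0)
          + (if p.2 ∈ S ∧ p.1 ∉ S then (1:ℝ) else 0) := by
      rintro ⟨i, j⟩ _
      by_cases hi : i ∈ S <;> by_cases hj : j ∈ S <;> simp [hy_def, hi, hj]
    rw [Finset.sum_congr rfl hsplit, Finset.sum_add_distrib]
    have hswap : ∑ p ∈ univ.filter (fun p : Fin n × Fin n => G.Adj p.1 p.2),
        (if p.2 ∈ S ∧ p.1 ∉ S then (1:ℝ) else 0)
        = ∑ p ∈ univ.filter (fun p : Fin n × Fin n => G.Adj p.1 p.2),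
          (if p.1 ∈ S ∧ p.2 ∉ S then (1:ℝ) else 0) :=
      swap_adj_sum G (fun i j => if i ∈ S ∧ j ∉ S then (1:ℝ) else 0)
    rw [hswap]
    have hcard : ∑ p ∈ univ.filter (fun p : Fin n × Fin n => G.Adj p.1 p.2),
        (if p.1 ∈ S ∧ p.2 ∉ S then (1:ℝ) else 0) = E := by
      rw [hE_def, ← Finset.sum_filter, Finset.filter_filter]
      simp
    rw [hcard]
    ring
  -- denominator computation
  have hD : ∀ c : ℝ, ∑ i, (G.degree i : ℝ) * |y i - c| = a * |1 - c| + b * |c| := by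
    intro c
    rw [← Finset.sum_add_sum_compl S]
    congr 1
    · rw [ha_def, Finset.sum_mul]
      refine Finset.sum_congr rfl fun i hi => ?_
      simp [hy_def, hi]
    · rw [hb_def, Finset.sum_mul]
      refine Finset.sum_congr rfl fun i hi => ?_
      rw [Finset.mem_compl] at hi
      simp [hy_def, hi]
  have hub : ∀ r ∈ { r : ℝ | ∃ c : ℝ,
      r = energy G y / ∑ i, (G.degree i : ℝ) * |y i - c| }, r ≤ E / min a b := by
    rintro r ⟨c, rfl⟩
    rw [hE, hD c]
    apply div_le_div_of_nonneg_left hEnn hm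
    have h1 : (1:ℝ) ≤ |1 - c| + |c| := by
      have := abs_add_le (1 - c) c
      simpa using this
    have h2 : min a b * |1 - c| ≤ a * |1 - c| :=
      mul_le_mul_of_nonneg_right (min_le_left _ _) (abs_nonneg _)
    have h3 : min a b * |c| ≤ b * |c| :=
      mul_le_mul_of_nonneg_right (min_le_right _ _) (abs_nonneg _)
    nlinarith [mul_le_mul_of_nonneg_left h1 hm.le]
  have hmemQ : E / min a b ∈ { r : ℝ | ∃ c : ℝ,
      r = energy G y / ∑ i, (G.degree i : ℝ) * |y i - c| } := by
    rcases le_total a b with h | h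
    · exact ⟨0, by rw [hE, hD 0]; simp [min_eq_left h]⟩
    · exact ⟨1, by rw [hE, hD 1]; simp [min_eq_right h]⟩
  refine ⟨y, ?_⟩
  rw [hval]
  exact (le_antisymm (csSup_le ⟨_, hmemQ⟩ hub) (le_csSup ⟨E / min a b, hub⟩ hmemQ)).symm
end

section
/- Let G be connected with n ≥ 2 vertices. Then the Cheeger constant equals the second eigenvalue of the 1-Laplacian: h(G) = μ₂ = min_{x∈π} I(x). -/
open Finset

section aux
variable {n : ℕ} (G : SimpleGraph (Fin n)) [DecidableRel G.Adj]

def cutCard (S : Finset (Fin n)) : ℕ :=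
  (univ.filter (fun p : Fin n × Fin n => G.Adj p.1 p.2 ∧ p.1 ∈ S ∧ p.2 ∉ S)).card

lemma cutCard_compl (S : Finset (Fin n)) : cutCard G Sᶜ = cutCard G S := by
  unfold cutCard
  refine Finset.card_bij' (fun p _ => p.swap) (fun p _ => p.swap) ?_ ?_ (fun p _ => rfl) (fun p _ => rfl)
  · rintro ⟨a, b⟩ hp
    simp only [mem_filter, mem_univ, true_and, Finset.mem_compl, not_not] at hp ⊢
    exact ⟨hp.1.symm, hp.2.2, hp.2.1⟩
  · rintro ⟨a, b⟩ hp
    simp only [mem_filter, mem_univ, true_and, Finset.mem_compl, not_not] at hp ⊢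
    exact ⟨hp.1.symm, hp.2.2, hp.2.1⟩

lemma double_sum_eq (f : Fin n → Fin n → ℝ) :
    ∑ i, ∑ j ∈ G.neighborFinset i, f i j
      = ∑ p ∈ univ.filter (fun p : Fin n × Fin n => G.Adj p.1 p.2), f p.1 p.2 := by
  rw [Finset.sum_filter, ← Finset.univ_product_univ, Finset.sum_product]
  refine Finset.sum_congr rfl fun i _ => ?_
  rw [G.neighborFinset_eq_filter, Finset.sum_filter]

lemma cutCard_swap (S : Finset (Fin n)) :
    (univ.filter (fun p : Fin n × Fin n => G.Adj p.1 p.2 ∧ p.2 ∈ S ∧ p.1 ∉ S)).card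
      = cutCard G S := by
  unfold cutCard
  refine Finset.card_bij' (fun p _ => p.swap) (fun p _ => p.swap) ?_ ?_ (fun p _ => rfl) (fun p _ => rfl)
  · rintro ⟨a, b⟩ hp
    simp only [mem_filter, mem_univ, true_and] at hp ⊢
    exact ⟨hp.1.symm, hp.2.1, hp.2.2⟩
  · rintro ⟨a, b⟩ hp
    simp only [mem_filter, mem_univ, true_and] at hp ⊢
    exact ⟨hp.1.symm, hp.2.1, hp.2.2⟩

lemma sum_ite_card (s : Finset (Fin n × Fin n)) (P : Fin n × Fin n → Prop) [DecidablePred P] (c : ℝ) :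
    ∑ p ∈ s, (if P p then c else 0) = c * (s.filter P).card := by
  rw [← Finset.sum_filter, Finset.sum_const, nsmul_eq_mul, mul_comm]

lemma energy_indicator (S : Finset (Fin n)) (c : ℝ) (hc : 0 ≤ c) :
    energy G (fun i => if i ∈ S then c else 0) = c * cutCard G S := by
  unfold energy
  rw [double_sum_eq]
  have h1 : ∀ p : Fin n × Fin n,
      |(if p.1 ∈ S then c else 0) - (if p.2 ∈ S then c else 0)|
        = (if p.1 ∈ S ∧ p.2 ∉ S then c else 0) + (if p.2 ∈ S ∧ p.1 ∉ S then c else 0) := by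
    intro p
    by_cases h1 : p.1 ∈ S <;> by_cases h2 : p.2 ∈ S <;>
      simp [h1, h2, abs_of_nonneg hc, sub_zero, zero_sub, abs_neg]
  rw [Finset.sum_congr rfl (fun p _ => h1 p), Finset.sum_add_distrib,
    sum_ite_card, sum_ite_card, Finset.filter_filter, Finset.filter_filter]
  have e1 : (univ.filter (fun p : Fin n × Fin n => G.Adj p.1 p.2 ∧ p.1 ∈ S ∧ p.2 ∉ S)).card
      = cutCard G S := rfl
  have e2 : (univ.filter (fun p : Fin n × Fin n => G.Adj p.1 p.2 ∧ p.2 ∈ S ∧ p.1 ∉ S)).card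
      = cutCard G S := cutCard_swap G S
  rw [e1, e2]; ring

end aux

section main
variable {n : ℕ} (G : SimpleGraph (Fin n)) [DecidableRel G.Adj]

lemma energy_nonneg (x : Fin n → ℝ) : 0 ≤ energy G x := by
  unfold energy
  apply mul_nonneg (by norm_num)
  exact Finset.sum_nonneg fun i _ => Finset.sum_nonneg fun j _ => abs_nonneg _

lemma cheeger_bddBelow :
    BddBelow { r : ℝ | ∃ S : Finset (Fin n), S.Nonempty ∧ S ≠ univ ∧
      r = ((univ.filter (fun p : Fin n × Fin n => G.Adj p.1 p.2 ∧ p.1 ∈ S ∧ p.2 ∉ S)).card : ℝ) /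
        min (∑ i ∈ S, (G.degree i : ℝ)) (∑ i ∈ Sᶜ, (G.degree i : ℝ)) } := by
  refine ⟨0, ?_⟩
  rintro r ⟨S, -, -, rfl⟩
  apply div_nonneg (by positivity)
  exact le_min (Finset.sum_nonneg fun i _ => by positivity)
    (Finset.sum_nonneg fun i _ => by positivity)

lemma vol_pos (hd : ∀ i, 0 < G.degree i) {S : Finset (Fin n)} (hS : S.Nonempty) :
    0 < ∑ i ∈ S, (G.degree i : ℝ) :=
  Finset.sum_pos (fun i _ => by exact_mod_cast hd i) hS

lemma cheeger_mul_vol_le (hd : ∀ i, 0 < G.degree i) {S : Finset (Fin n)}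
    (hS : S.Nonempty) (hSu : S ≠ univ)
    (hvol : ∑ i ∈ S, (G.degree i : ℝ) ≤ ∑ i ∈ Sᶜ, (G.degree i : ℝ)) :
    cheeger G * ∑ i ∈ S, (G.degree i : ℝ) ≤ (cutCard G S : ℝ) := by
  have hpos : 0 < ∑ i ∈ S, (G.degree i : ℝ) := vol_pos G hd hS
  have hle : cheeger G ≤ (cutCard G S : ℝ) / ∑ i ∈ S, (G.degree i : ℝ) := by
    have : (cutCard G S : ℝ) / ∑ i ∈ S, (G.degree i : ℝ) ∈
        { r : ℝ | ∃ S : Finset (Fin n), S.Nonempty ∧ S ≠ univ ∧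
          r = ((univ.filter (fun p : Fin n × Fin n => G.Adj p.1 p.2 ∧ p.1 ∈ S ∧ p.2 ∉ S)).card : ℝ) /
            min (∑ i ∈ S, (G.degree i : ℝ)) (∑ i ∈ Sᶜ, (G.degree i : ℝ)) } := by
      exact ⟨S, hS, hSu, by rw [min_eq_left hvol]; rfl⟩
    exact csInf_le (cheeger_bddBelow G) this
  calc cheeger G * ∑ i ∈ S, (G.degree i : ℝ)
      ≤ ((cutCard G S : ℝ) / ∑ i ∈ S, (G.degree i : ℝ)) * ∑ i ∈ S, (G.degree i : ℝ) :=
        mul_le_mul_of_nonneg_right hle hpos.le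
    _ = (cutCard G S : ℝ) := by field_simp

lemma key_lemma (hd : ∀ i, 0 < G.degree i) :
    ∀ k : ℕ, ∀ y : Fin n → ℝ, (∀ i, 0 ≤ y i) →
    (univ.filter fun i => y i ≠ 0).card ≤ k →
    (∑ i ∈ univ.filter (fun i => y i ≠ 0), (G.degree i : ℝ))
      ≤ ∑ i ∈ (univ.filter (fun i => y i ≠ 0))ᶜ, (G.degree i : ℝ) →
    cheeger G * ∑ i, (G.degree i : ℝ) * y i ≤ energy G y := by
  intro k
  induction k with
  | zero =>
    intro y hy hcard _
    have hz : ∀ i, y i = 0 := by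
      intro i
      by_contra h
      have hmem : i ∈ univ.filter fun i => y i ≠ 0 := by simp [h]
      have := Finset.card_pos.mpr ⟨i, hmem⟩
      omega
    have : energy G y = 0 := by
      unfold energy; simp [hz]
    rw [this]
    have : ∑ i, (G.degree i : ℝ) * y i = 0 := by simp [hz]
    rw [this, mul_zero]
  | succ k ih =>
    intro y hy hcard hvol
    by_cases h0 : ∀ i, y i = 0
    · have : energy G y = 0 := by unfold energy; simp [h0]
      rw [this]
      have : ∑ i, (G.degree i : ℝ) * y i = 0 := by simp [h0]
      rw [this, mul_zero]
    push_neg at h0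
    set S := univ.filter (fun i => y i ≠ 0) with hSdef
    have hSne : S.Nonempty := by
      obtain ⟨i, hi⟩ := h0
      exact ⟨i, by simp [hSdef, hi]⟩
    set m := S.inf' hSne y with hmdef
    obtain ⟨i₀, hi₀S, hi₀⟩ := Finset.exists_mem_eq_inf' hSne y
    have hmpos : 0 < m := by
      rw [hmdef, hi₀]
      rcases (hy i₀).lt_or_eq with h | h
      · exact h
      · exfalso; have : y i₀ ≠ 0 := by simpa [hSdef] using hi₀S
        exact this h.symm
    have hmle : ∀ i ∈ S, m ≤ y i := fun i hi => Finset.inf'_le y hi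
    have hyS : ∀ i, i ∉ S → y i = 0 := by
      intro i hi
      by_contra h
      exact hi (by simp [hSdef, h])
    set y' := fun i => if i ∈ S then y i - m else 0 with hy'def
    have hy' : ∀ i, 0 ≤ y' i := by
      intro i
      simp only [hy'def]
      split_ifs with h
      · linarith [hmle i h]
      · exact le_rfl
    have hy'supp : ∀ i, y' i ≠ 0 → i ∈ S.erase i₀ := by
      intro i hi
      rw [Finset.mem_erase]
      constructor
      · rintro rfl
        apply hi
        simp only [hy'def, if_pos hi₀S]
        rw [← hi₀, hmdef]
        exact sub_self _
      · by_contra h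
        exact hi (by simp [hy'def, h])
    have hsub : (univ.filter fun i => y' i ≠ 0) ⊆ S.erase i₀ := by
      intro i hi
      exact hy'supp i (by simpa using hi)
    have hcard' : (univ.filter fun i => y' i ≠ 0).card ≤ k := by
      have h1 := Finset.card_le_card hsub
      have h2 : (S.erase i₀).card = S.card - 1 := Finset.card_erase_of_mem hi₀S
      have h3 : 0 < S.card := Finset.card_pos.mpr hSne
      omega
    have hsubS : (univ.filter fun i => y' i ≠ 0) ⊆ S :=
      hsub.trans (Finset.erase_subset _ _)
    have hvol' : (∑ i ∈ univ.filter (fun i => y' i ≠ 0), (G.degree i : ℝ))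
        ≤ ∑ i ∈ (univ.filter (fun i => y' i ≠ 0))ᶜ, (G.degree i : ℝ) := by
      have h1 : (∑ i ∈ univ.filter (fun i => y' i ≠ 0), (G.degree i : ℝ))
          ≤ ∑ i ∈ S, (G.degree i : ℝ) :=
        Finset.sum_le_sum_of_subset_of_nonneg hsubS (fun i _ _ => by positivity)
      have h2 : (∑ i ∈ Sᶜ, (G.degree i : ℝ))
          ≤ ∑ i ∈ (univ.filter (fun i => y' i ≠ 0))ᶜ, (G.degree i : ℝ) :=
        Finset.sum_le_sum_of_subset_of_nonneg (Finset.compl_subset_compl.mpr hsubS)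
          (fun i _ _ => by positivity)
      linarith
    have hedge : ∀ i j : Fin n,
        |y i - y j| = |(if i ∈ S then m else 0) - (if j ∈ S then m else 0)| + |y' i - y' j| := by
      intro i j
      by_cases hi : i ∈ S <;> by_cases hj : j ∈ S
      · simp only [hy'def, if_pos hi, if_pos hj]
        rw [sub_self, abs_zero, zero_add, show y i - m - (y j - m) = y i - y j from by ring]
      · rw [hyS j hj]
        simp only [hy'def, if_pos hi, if_neg hj, sub_zero]
        rw [abs_of_nonneg (hy i), abs_of_pos hmpos, abs_of_nonneg (by linarith [hmle i hi])]
        ring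
      · rw [hyS i hi]
        simp only [hy'def, if_pos hj, if_neg hi, zero_sub, abs_neg]
        rw [abs_of_nonneg (hy j), abs_of_pos hmpos, abs_of_nonneg (by linarith [hmle j hj])]
        ring
      · rw [hyS i hi, hyS j hj]
        simp [hy'def, hi, hj]
    have hEsplit : energy G y = energy G (fun i => if i ∈ S then m else 0) + energy G y' := by
      unfold energy
      rw [← mul_add, ← Finset.sum_add_distrib]
      congr 1
      refine Finset.sum_congr rfl fun i _ => ?_
      rw [← Finset.sum_add_distrib]
      exact Finset.sum_congr rfl fun j _ => hedge i j
    have hEind : energy G (fun i => if i ∈ S then m else 0) = m * cutCard G S :=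
      energy_indicator G S m hmpos.le
    have hsum : ∑ i, (G.degree i : ℝ) * y i
        = m * (∑ i ∈ S, (G.degree i : ℝ)) + ∑ i, (G.degree i : ℝ) * y' i := by
      have step : ∀ i, (G.degree i : ℝ) * y i
          = (if i ∈ S then (G.degree i : ℝ) * m else 0) + (G.degree i : ℝ) * y' i := by
        intro i
        by_cases hi : i ∈ S
        · simp only [hy'def, if_pos hi]; ring
        · rw [hyS i hi]; simp [hy'def, hi]
      rw [Finset.sum_congr rfl (fun i _ => step i), Finset.sum_add_distrib]
      congr 1
      rw [Finset.sum_ite_mem, Finset.univ_inter, Finset.mul_sum]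
      exact Finset.sum_congr rfl fun i _ => mul_comm _ _
    have hSneq : S ≠ univ := by
      intro h
      have hc : (Sᶜ : Finset (Fin n)) = ∅ := by rw [h]; exact Finset.compl_univ
      rw [hc, Finset.sum_empty] at hvol
      linarith [vol_pos G hd hSne]
    have hcut := cheeger_mul_vol_le G hd hSne hSneq hvol
    have hih := ih y' hy' hcard' hvol'
    calc cheeger G * ∑ i, (G.degree i : ℝ) * y i
        = m * (cheeger G * ∑ i ∈ S, (G.degree i : ℝ))
          + cheeger G * ∑ i, (G.degree i : ℝ) * y' i := by rw [hsum]; ring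
      _ ≤ m * (cutCard G S : ℝ) + energy G y' := by
          gcongr
      _ = energy G y := by rw [hEsplit, hEind]

lemma deg_pos (hconn : G.Connected) (hn : 2 ≤ n) (i : Fin n) : 0 < G.degree i := by
  rw [G.degree_pos_iff_exists_adj]
  have : 1 < Fintype.card (Fin n) := by simp; omega
  obtain ⟨j, hj⟩ := Fintype.exists_ne_of_one_lt_card this i
  obtain ⟨w⟩ := hconn.preconnected i j
  cases w with
  | nil => exact absurd rfl hj
  | cons h p => exact ⟨_, h⟩

lemma abs_split (a b : ℝ) :
    |a - b| = |max a 0 - max b 0| + |max (-a) 0 - max (-b) 0| := by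
  rcases le_total a 0 with ha | ha <;> rcases le_total b 0 with hb | hb
  · rw [max_eq_right ha, max_eq_right hb, max_eq_left (neg_nonneg.mpr ha),
      max_eq_left (neg_nonneg.mpr hb), sub_self, abs_zero, zero_add,
      show -a - -b = -(a - b) from by ring, abs_neg]
  · rw [max_eq_right ha, max_eq_left hb, max_eq_left (neg_nonneg.mpr ha),
      max_eq_right (neg_nonpos.mpr hb), zero_sub, sub_zero, abs_neg,
      abs_of_nonneg hb, abs_of_nonneg (neg_nonneg.mpr ha), abs_of_nonpos (by linarith)]
    ring
  · rw [max_eq_left ha, max_eq_right hb, max_eq_right (neg_nonpos.mpr ha),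
      max_eq_left (neg_nonneg.mpr hb), sub_zero, zero_sub, abs_neg,
      abs_of_nonneg ha, abs_of_nonneg (neg_nonneg.mpr hb), abs_of_nonneg (by linarith)]
    ring
  · rw [max_eq_left ha, max_eq_left hb, max_eq_right (neg_nonpos.mpr ha),
      max_eq_right (neg_nonpos.mpr hb), sub_self, abs_zero, add_zero]

lemma max_abs (a : ℝ) : |a| = max a 0 + max (-a) 0 := by
  rcases le_total a 0 with h | h
  · rw [max_eq_right h, max_eq_left (neg_nonneg.mpr h), abs_of_nonpos h]; ring
  · rw [max_eq_left h, max_eq_right (neg_nonpos.mpr h), abs_of_nonneg h]; ring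

lemma cheeger_le_energy (hd : ∀ i, 0 < G.degree i) {x : Fin n → ℝ} (hx : x ∈ piSet G) :
    cheeger G ≤ energy G x := by
  obtain ⟨hx1, hx2⟩ := hx
  set xp := fun i => max (x i) 0 with hxp
  set xm := fun i => max (-(x i)) 0 with hxm
  have hE : energy G x = energy G xp + energy G xm := by
    unfold energy
    rw [← mul_add, ← Finset.sum_add_distrib]
    congr 1
    refine Finset.sum_congr rfl fun i _ => ?_
    rw [← Finset.sum_add_distrib]
    exact Finset.sum_congr rfl fun j _ => abs_split _ _
  have hsum : ∑ i, (G.degree i : ℝ) * |x i|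
      = (∑ i, (G.degree i : ℝ) * xp i) + ∑ i, (G.degree i : ℝ) * xm i := by
    rw [← Finset.sum_add_distrib]
    refine Finset.sum_congr rfl fun i _ => ?_
    rw [max_abs]; ring
  have habs := abs_le.mp hx2
  -- complement sums
  have hcompl : ∀ (p : Fin n → Prop) (_ : DecidablePred p),
      (univ.filter p)ᶜ = univ.filter (fun i => ¬ p i) := by
    intro p hp; ext i; simp
  have hfp : (univ.filter fun i => xp i ≠ 0) = univ.filter (fun i => 0 < x i) := by
    ext i
    simp only [mem_filter, mem_univ, true_and, hxp]
    constructor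
    · intro h; by_contra hc; push_neg at hc; exact h (max_eq_right hc)
    · intro h; rw [max_eq_left h.le]; exact h.ne'
  have hfm : (univ.filter fun i => xm i ≠ 0) = univ.filter (fun i => x i < 0) := by
    ext i
    simp only [mem_filter, mem_univ, true_and, hxm]
    constructor
    · intro h; by_contra hc; push_neg at hc
      exact h (max_eq_right (neg_nonpos.mpr hc))
    · intro h; rw [max_eq_left (by linarith)]; intro hc; linarith [neg_eq_zero.mp hc]
  have hsplitp : ∑ i ∈ univ.filter (fun i => ¬ 0 < x i), (G.degree i : ℝ)
      = deltaMinus G x + deltaZero G x := by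
    unfold deltaMinus deltaZero
    rw [Finset.sum_filter, Finset.sum_filter, Finset.sum_filter, ← Finset.sum_add_distrib]
    refine Finset.sum_congr rfl fun i _ => ?_
    rcases lt_trichotomy (x i) 0 with h | h | h
    · rw [if_pos (show ¬ 0 < x i by intro h'; linarith), if_pos h, if_neg h.ne, add_zero]
    · rw [if_pos (show ¬ 0 < x i by rw [h]; exact lt_irrefl 0),
        if_neg (show ¬ x i < 0 by rw [h]; exact lt_irrefl 0), if_pos h, zero_add]
    · rw [if_neg (not_not_intro h), if_neg (show ¬ x i < 0 by intro h'; linarith),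
        if_neg h.ne', add_zero]
  have hsplitm : ∑ i ∈ univ.filter (fun i => ¬ x i < 0), (G.degree i : ℝ)
      = deltaPlus G x + deltaZero G x := by
    unfold deltaPlus deltaZero
    rw [Finset.sum_filter, Finset.sum_filter, Finset.sum_filter, ← Finset.sum_add_distrib]
    refine Finset.sum_congr rfl fun i _ => ?_
    rcases lt_trichotomy (x i) 0 with h | h | h
    · rw [if_neg (not_not_intro h), if_neg (show ¬ 0 < x i by intro h'; linarith),
        if_neg h.ne, add_zero]
    · rw [if_pos (show ¬ x i < 0 by rw [h]; exact lt_irrefl 0),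
        if_neg (show ¬ 0 < x i by rw [h]; exact lt_irrefl 0), if_pos h, zero_add]
    · rw [if_pos (show ¬ x i < 0 by intro h'; linarith), if_pos h, if_neg h.ne', add_zero]
  have hkp : cheeger G * ∑ i, (G.degree i : ℝ) * xp i ≤ energy G xp := by
    apply key_lemma G hd n
    · intro i; exact le_max_right _ _
    · exact (Finset.card_filter_le _ _).trans (by simp)
    · rw [hfp, hcompl _ _, hsplitp]
      have : deltaPlus G x = ∑ i ∈ univ.filter (fun i => 0 < x i), (G.degree i : ℝ) := rfl
      rw [← this]; linarith
  have hkm : cheeger G * ∑ i, (G.degree i : ℝ) * xm i ≤ energy G xm := by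
    apply key_lemma G hd n
    · intro i; exact le_max_right _ _
    · exact (Finset.card_filter_le _ _).trans (by simp)
    · rw [hfm, hcompl _ _, hsplitm]
      have : deltaMinus G x = ∑ i ∈ univ.filter (fun i => x i < 0), (G.degree i : ℝ) := rfl
      rw [← this]; linarith
  calc cheeger G = cheeger G * ∑ i, (G.degree i : ℝ) * |x i| := by rw [hx1, mul_one]
    _ = cheeger G * ∑ i, (G.degree i : ℝ) * xp i
        + cheeger G * ∑ i, (G.degree i : ℝ) * xm i := by rw [hsum]; ring
    _ ≤ energy G xp + energy G xm := add_le_add hkp hkm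
    _ = energy G x := hE.symm

lemma exists_pi_of_half (hd : ∀ i, 0 < G.degree i) {S : Finset (Fin n)}
    (hS : S.Nonempty) (hSu : S ≠ univ)
    (hvol : ∑ i ∈ S, (G.degree i : ℝ) ≤ ∑ i ∈ Sᶜ, (G.degree i : ℝ)) :
    ∃ x ∈ piSet G, energy G x = (cutCard G S : ℝ) / ∑ i ∈ S, (G.degree i : ℝ) := by
  set v := ∑ i ∈ S, (G.degree i : ℝ) with hvdef
  have hv : 0 < v := vol_pos G hd hS
  set x := (fun i => if i ∈ S then v⁻¹ else (0:ℝ)) with hxdef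
  have hx1 : ∑ i, (G.degree i : ℝ) * |x i| = 1 := by
    have step : ∀ i, (G.degree i : ℝ) * |x i|
        = if i ∈ S then (G.degree i : ℝ) * v⁻¹ else 0 := by
      intro i
      simp only [hxdef]
      split_ifs with h
      · rw [abs_of_nonneg (by positivity)]
      · simp
    rw [Finset.sum_congr rfl fun i _ => step i, Finset.sum_ite_mem, Finset.univ_inter,
      ← Finset.sum_mul, ← hvdef, mul_inv_cancel₀ hv.ne']
  have hfp : (univ.filter fun i => 0 < x i) = S := by
    ext i
    simp only [mem_filter, mem_univ, true_and, hxdef]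
    split_ifs with h
    · simp [h]; positivity
    · simp [h]
  have hfm : (univ.filter fun i => x i < 0) = ∅ := by
    ext i
    simp only [mem_filter, mem_univ, true_and, hxdef, Finset.notMem_empty, iff_false]
    split_ifs with h
    · intro hc; nlinarith [inv_pos.mpr hv]
    · simp
  have hfz : (univ.filter fun i => x i = 0) = Sᶜ := by
    ext i
    simp only [mem_filter, mem_univ, true_and, hxdef, Finset.mem_compl]
    split_ifs with h
    · constructor
      · intro hc; exact absurd hc (inv_ne_zero hv.ne')
      · intro hc; exact absurd h hc
    · simp [h]
  refine ⟨x, ⟨hx1, ?_⟩, ?_⟩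
  · unfold deltaPlus deltaMinus deltaZero
    rw [hfp, hfm, hfz, Finset.sum_empty, sub_zero, abs_of_nonneg hv.le]
    exact hvol
  · rw [show energy G x = v⁻¹ * cutCard G S from energy_indicator G S v⁻¹ (by positivity),
      div_eq_mul_inv, mul_comm]

end main


/-- Theorem 5.15: for connected `G` with `n ≥ 2`, the Cheeger constant
equals the second eigenvalue of the 1-Laplacian: `h(G) = μ₂ = min_{x ∈ π} I(x)`. -/
theorem cheeger_eq_second_eigenvalue {n : ℕ} (G : SimpleGraph (Fin n)) [DecidableRel G.Adj]
    (hconn : G.Connected) (hn : 2 ≤ n) :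
    cheeger G = sInf (energy G '' piSet G) := by
  have hd : ∀ i, 0 < G.degree i := deg_pos G hconn hn
  have hsubset : { r : ℝ | ∃ S : Finset (Fin n), S.Nonempty ∧ S ≠ univ ∧
      r = ((univ.filter (fun p : Fin n × Fin n => G.Adj p.1 p.2 ∧ p.1 ∈ S ∧ p.2 ∉ S)).card : ℝ) /
        min (∑ i ∈ S, (G.degree i : ℝ)) (∑ i ∈ Sᶜ, (G.degree i : ℝ)) }
      ⊆ energy G '' piSet G := by
    rintro r ⟨S, hS, hSu, rfl⟩
    rcases le_total (∑ i ∈ S, (G.degree i : ℝ)) (∑ i ∈ Sᶜ, (G.degree i : ℝ)) with h | h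
    · obtain ⟨x, hx, hex⟩ := exists_pi_of_half G hd hS hSu h
      refine ⟨x, hx, ?_⟩
      rw [hex, min_eq_left h]; rfl
    · have hS' : (Sᶜ : Finset (Fin n)).Nonempty :=
        Finset.nonempty_iff_ne_empty.mpr fun hc =>
          hSu (by rwa [Finset.compl_eq_empty_iff] at hc)
      have hSu' : (Sᶜ : Finset (Fin n)) ≠ univ := by
        intro hc
        have hSe : S = ∅ := by rw [← compl_compl S, hc, Finset.compl_univ]
        exact hS.ne_empty hSe
      have h' : ∑ i ∈ Sᶜ, (G.degree i : ℝ) ≤ ∑ i ∈ Sᶜᶜ, (G.degree i : ℝ) := by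
        rw [compl_compl]; exact h
      obtain ⟨x, hx, hex⟩ := exists_pi_of_half G hd hS' hSu' h'
      refine ⟨x, hx, ?_⟩
      rw [hex, cutCard_compl, min_eq_right h]; rfl
  have hne : { r : ℝ | ∃ S : Finset (Fin n), S.Nonempty ∧ S ≠ univ ∧
      r = ((univ.filter (fun p : Fin n × Fin n => G.Adj p.1 p.2 ∧ p.1 ∈ S ∧ p.2 ∉ S)).card : ℝ) /
        min (∑ i ∈ S, (G.degree i : ℝ)) (∑ i ∈ Sᶜ, (G.degree i : ℝ)) }.Nonempty := by
    have hi0 : (0 : ℕ) < n := by omega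
    set i0 : Fin n := ⟨0, hi0⟩ with hi0def
    refine ⟨_, ⟨{i0}, ⟨i0, Finset.mem_singleton_self i0⟩, ?_, rfl⟩⟩
    intro hc
    have h1 : ({i0} : Finset (Fin n)).card = 1 := Finset.card_singleton i0
    rw [hc] at h1
    simp only [Finset.card_univ, Fintype.card_fin] at h1
    omega
  unfold cheeger
  apply le_antisymm
  · refine le_csInf (hne.mono hsubset) ?_
    rintro b ⟨x, hx, rfl⟩
    exact cheeger_le_energy G hd hx
  · exact csInf_le_csInf ⟨0, by rintro b ⟨x, _, rfl⟩; exact energy_nonneg G x⟩ hne hsubset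
end
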